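/- arXiv:0712.4163 — 6 statements merged into one kernel-verified Lean document; each statement's English description precedes it below -/
import Mathlib

section
/- Let H be a finite-dimensional complex Hilbert space and let ξ₁,…,ξ_r and η₁,…,η_r be two r-tuples of vectors in H. Then ∑_{k=1}^r ξ_k ⊗ ξ̄_k = ∑_{k=1}^r η_k ⊗ η̄_k (equality of the associated positive operators, where ξ⊗ξ̄ denotes the rank-one operator ζ ↦ ⟨ζ,ξ⟩ξ) if and only if there is a unitary r×r complex matrix (λ_{ij}) such that η_i = ∑_{j=1}^r λ_{ij} ξ_j for all i. -/
open scoped ComplexInnerProductSpace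

noncomputable section Aux

variable {H : Type*} [NormedAddCommGroup H] [InnerProductSpace ℂ H]
  [FiniteDimensional ℂ H] {r : ℕ}

/-- The linear map `E → H`, `v ↦ ∑ j, v j • ξ j`. -/
def auxA (ξ : Fin r → H) : EuclideanSpace ℂ (Fin r) →ₗ[ℂ] H where
  toFun v := ∑ j, v j • ξ j
  map_add' v w := by simp [add_smul, Finset.sum_add_distrib]
  map_smul' c v := by simp [smul_smul, Finset.smul_sum]

omit [FiniteDimensional ℂ H] in
lemma auxA_apply (ξ : Fin r → H) (v : EuclideanSpace ℂ (Fin r)) :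
    auxA ξ v = ∑ j, v j • ξ j := rfl

lemma auxA_adjoint_apply (ξ : Fin r → H) (ζ : H) (k : Fin r) :
    (LinearMap.adjoint (auxA ξ)) ζ k = ⟪ξ k, ζ⟫ := by
  have h1 : ((LinearMap.adjoint (auxA ξ)) ζ) k
      = ⟪EuclideanSpace.single k (1:ℂ), (LinearMap.adjoint (auxA ξ)) ζ⟫ := by
    simp [EuclideanSpace.inner_single_left]
  rw [h1, LinearMap.adjoint_inner_right]
  simp [auxA, EuclideanSpace.single_apply, inner_sum, inner_smul_right]

lemma auxA_comp_adjoint (ξ : Fin r → H) (ζ : H) :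
    auxA ξ (LinearMap.adjoint (auxA ξ) ζ) = ∑ k, ⟪ξ k, ζ⟫ • ξ k := by
  rw [auxA_apply]
  exact Finset.sum_congr rfl fun k _ => by rw [auxA_adjoint_apply]

end Aux

/-- Two r-tuples of vectors in a finite-dimensional complex Hilbert
space give the same sum of rank-one operators `ξ ⊗ ξ̄ : ζ ↦ ⟨ζ,ξ⟩ξ` iff they are
related by a unitary r×r scalar matrix. -/
theorem sum_rank_one_eq_iff_unitary
    {H : Type*} [NormedAddCommGroup H] [InnerProductSpace ℂ H]
    [FiniteDimensional ℂ H] (r : ℕ) (ξ η : Fin r → H) :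
    (∀ ζ : H, ∑ k, ⟪ξ k, ζ⟫ • ξ k = ∑ k, ⟪η k, ζ⟫ • η k) ↔
      ∃ lam : Matrix (Fin r) (Fin r) ℂ,
        lam ∈ Matrix.unitaryGroup (Fin r) ℂ ∧
        ∀ i, η i = ∑ j, lam i j • ξ j := by
  constructor
  · intro hsum
    classical
    set E := EuclideanSpace ℂ (Fin r)
    let A : E →ₗ[ℂ] H := auxA ξ
    let B : E →ₗ[ℂ] H := auxA η
    let Ad : H →ₗ[ℂ] E := LinearMap.adjoint A
    let Bd : H →ₗ[ℂ] E := LinearMap.adjoint B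
    -- norms agree
    have hnorm : ∀ ζ : H, ‖Ad ζ‖ = ‖Bd ζ‖ := by
      intro ζ
      have h1 : (⟪Ad ζ, Ad ζ⟫ : ℂ) = ⟪Bd ζ, Bd ζ⟫ := by
        show (⟪LinearMap.adjoint A ζ, LinearMap.adjoint A ζ⟫ : ℂ)
            = ⟪LinearMap.adjoint B ζ, LinearMap.adjoint B ζ⟫
        rw [LinearMap.adjoint_inner_left, LinearMap.adjoint_inner_left,
          auxA_comp_adjoint, auxA_comp_adjoint, hsum]
      rw [norm_eq_sqrt_re_inner (𝕜 := ℂ), norm_eq_sqrt_re_inner (𝕜 := ℂ), h1]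
    -- kernel inclusion
    have hker : LinearMap.ker Ad ≤ LinearMap.ker Bd := by
      intro ζ hζ
      rw [LinearMap.mem_ker] at hζ ⊢
      have := hnorm ζ
      rw [hζ, norm_zero] at this
      exact norm_eq_zero.mp this.symm
    -- the isometry on range Ad
    let L0 : LinearMap.range Ad →ₗ[ℂ] E :=
      ((LinearMap.ker Ad).liftQ Bd hker).comp Ad.quotKerEquivRange.symm.toLinearMap
    have hL0 : ∀ ζ : H, L0 ⟨Ad ζ, LinearMap.mem_range_self _ ζ⟩ = Bd ζ := by
      intro ζ
      have : Ad.quotKerEquivRange.symm ⟨Ad ζ, LinearMap.mem_range_self _ ζ⟩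
          = (LinearMap.ker Ad).mkQ ζ := Ad.quotKerEquivRange_symm_apply_image ζ _
      simp only [L0, LinearMap.comp_apply, LinearEquiv.coe_coe, this]
      rfl
    have hL0norm : ∀ s : LinearMap.range Ad, ‖L0 s‖ = ‖s‖ := by
      rintro ⟨s, hs⟩
      obtain ⟨ζ, rfl⟩ := hs
      rw [hL0]
      exact (hnorm ζ).symm
    let L : LinearMap.range Ad →ₗᵢ[ℂ] E := ⟨L0, hL0norm⟩
    let U : E →ₗᵢ[ℂ] E := L.extend
    have hU : ∀ ζ : H, U (Ad ζ) = Bd ζ := by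
      intro ζ
      have := L.extend_apply ⟨Ad ζ, LinearMap.mem_range_self _ ζ⟩
      rw [this]
      exact hL0 ζ
    let Ud : E →ₗ[ℂ] E := LinearMap.adjoint U.toLinearMap
    have hUdU : ∀ x : E, Ud (U x) = x := by
      intro x
      apply ext_inner_right ℂ
      intro y
      show (⟪LinearMap.adjoint U.toLinearMap (U x), y⟫ : ℂ) = ⟪x, y⟫
      rw [LinearMap.adjoint_inner_left]
      exact U.inner_map_map x y
    have hUUd : ∀ x : E, U (Ud x) = x := by
      have hsurj : Function.Surjective U.toLinearMap :=
        (LinearMap.injective_iff_surjective).mp U.injective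
      intro x
      obtain ⟨y, hy⟩ := hsurj x
      have : U y = x := hy
      rw [← this, hUdU]
    have hUdinner : ∀ x y : E, (⟪Ud x, Ud y⟫ : ℂ) = ⟪x, y⟫ := by
      intro x y
      rw [← U.inner_map_map (Ud x) (Ud y), hUUd, hUUd]
    -- B = A ∘ Ud
    have hBA : ∀ v : E, B v = A (Ud v) := by
      intro v
      apply ext_inner_right ℂ
      intro ζ
      have h1 : (⟪B v, ζ⟫ : ℂ) = ⟪v, Bd ζ⟫ := (LinearMap.adjoint_inner_right B v ζ).symm
      have h2 : (⟪A (Ud v), ζ⟫ : ℂ) = ⟪Ud v, Ad ζ⟫ := (LinearMap.adjoint_inner_right A _ ζ).symm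
      rw [h1, h2, ← hU ζ]
      exact ((LinearMap.adjoint_inner_left U.toLinearMap (Ad ζ) v)).symm
    refine ⟨Matrix.of fun i j => Ud (EuclideanSpace.single i 1) j, ?_, ?_⟩
    · rw [Matrix.mem_unitaryGroup_iff]
      ext i k
      have h := hUdinner (EuclideanSpace.single k (1:ℂ)) (EuclideanSpace.single i 1)
      rw [Matrix.mul_apply]
      simp only [Matrix.star_apply, Matrix.one_apply]
      rw [PiLp.inner_apply] at h
      simp only [RCLike.inner_apply] at h
      rw [EuclideanSpace.inner_single_left] at h
      simp only [map_one, one_mul, EuclideanSpace.single_apply] at h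
      calc ∑ j, Ud (EuclideanSpace.single i 1) j * star (Ud (EuclideanSpace.single k 1) j)
          = ∑ j, (starRingEnd ℂ) (Ud (EuclideanSpace.single k 1) j)
              * Ud (EuclideanSpace.single i 1) j :=
            Finset.sum_congr rfl fun j _ => mul_comm _ _
        _ = if k = i then 1 else 0 := by rw [← h]; exact Finset.sum_congr rfl fun j _ => mul_comm _ _
        _ = if i = k then 1 else 0 := by simp [eq_comm]
    · intro i
      have hBe : B (EuclideanSpace.single i 1) = η i := by
        rw [auxA_apply]
        simp [EuclideanSpace.single_apply]
      rw [← hBe, hBA, auxA_apply]; rfl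
  · rintro ⟨lam, hlam, hrel⟩ ζ
    have hcol : ∀ j k : Fin r, ∑ i, (starRingEnd ℂ) (lam i j) * lam i k
        = if j = k then 1 else 0 := by
      intro j k
      have h1 : star lam * lam = 1 := (Unitary.mem_iff.mp hlam).1
      have := congrFun (congrFun h1 j) k
      rw [Matrix.mul_apply] at this
      simp only [Matrix.star_apply, Matrix.one_apply] at this
      rw [← this]
      rfl
    calc ∑ k, (⟪ξ k, ζ⟫ : ℂ) • ξ k
        = ∑ j, ∑ k, (if j = k then (1:ℂ) else 0) • (⟪ξ j, ζ⟫ • ξ k) := by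
          refine Finset.sum_congr rfl fun k _ => ?_
          simp
      _ = ∑ j, ∑ k, (∑ i, (starRingEnd ℂ) (lam i j) * lam i k) • (⟪ξ j, ζ⟫ • ξ k) := by
          refine Finset.sum_congr rfl fun j _ => Finset.sum_congr rfl fun k _ => by
            rw [hcol]
      _ = ∑ i, ∑ j, ∑ k, ((starRingEnd ℂ) (lam i j) * ⟪ξ j, ζ⟫) • (lam i k • ξ k) := by
          have : ∀ j k : Fin r, (∑ i, (starRingEnd ℂ) (lam i j) * lam i k) • ((⟪ξ j, ζ⟫ : ℂ) • ξ k)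
              = ∑ i, ((starRingEnd ℂ) (lam i j) * ⟪ξ j, ζ⟫) • (lam i k • ξ k) := by
            intro j k
            rw [Finset.sum_smul]
            refine Finset.sum_congr rfl fun i _ => ?_
            simp only [smul_smul]
            congr 1
            ring
          simp only [this]
          exact Eq.trans (Finset.sum_congr rfl fun j _ => Finset.sum_comm) Finset.sum_comm
      _ = ∑ i, ⟪η i, ζ⟫ • η i := by
          refine Finset.sum_congr rfl fun i _ => ?_
          rw [hrel i, sum_inner, Finset.sum_smul]
          refine Finset.sum_congr rfl fun j _ => ?_
          rw [inner_smul_left, Finset.smul_sum]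
end

section
/- Let H and K be finite-dimensional complex Hilbert spaces with dim H = n ≤ m = dim K, and let 1 ≤ r ≤ mn. Then there exist linearly independent operators v₁,…,v_r ∈ B(H,K) such that v₁*v₁ + ⋯ + v_r*v_r = 1_H. -/
open scoped InnerProductSpace ComplexConjugate

section Aux

variable {H K : Type*} [NormedAddCommGroup H] [InnerProductSpace ℂ H]
    [FiniteDimensional ℂ H] [NormedAddCommGroup K] [InnerProductSpace ℂ K]
    [FiniteDimensional ℂ K]

/-- Main auxiliary lemma: the mn clock-and-shift isometries. -/
theorem exists_family_aux (n m : ℕ) (hn : 0 < n) (hm : 0 < m) (hnm : n ≤ m)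
    (e : OrthonormalBasis (Fin n) ℂ H) (f : OrthonormalBasis (Fin m) ℂ K) :
    ∃ W : Fin m × Fin n → (H →ₗ[ℂ] K), LinearIndependent ℂ W ∧
      ∀ p, (LinearMap.adjoint (W p)) ∘ₗ (W p) = LinearMap.id := by
  classical
  set ω : ℂ := Complex.exp (2 * Real.pi * Complex.I / n) with hω
  have hωprim : IsPrimitiveRoot ω n := Complex.isPrimitiveRoot_exp n hn.ne'
  have hωabs : ∀ k : ℕ, (starRingEnd ℂ) (ω ^ k) * ω ^ k = 1 := by
    intro k
    have : ‖ω‖ = 1 := by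
      rw [hω]
      have : (2 * Real.pi * Complex.I / n : ℂ) = ((2 * Real.pi / n : ℝ) : ℂ) * Complex.I := by
        push_cast; ring
      rw [this, Complex.norm_exp_ofReal_mul_I]
    rw [← Complex.normSq_eq_conj_mul_self]
    simp [map_pow, Complex.normSq_eq_norm_sq, this]
  -- the shift map
  set s : Fin m → Fin n → Fin m := fun a i => ⟨((i : ℕ) + a) % m, Nat.mod_lt _ hm⟩ with hs
  have hs_inj_i : ∀ a : Fin m, ∀ i i' : Fin n, s a i = s a i' → i = i' := by
    intro a i i' h
    have h' : ((i : ℕ) + a) % m = ((i' : ℕ) + a) % m := congrArg Fin.val h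
    have h2 : (i : ℕ) % m = (i' : ℕ) % m := Nat.ModEq.add_right_cancel' _ h'
    have := i.2; have := i'.2
    rw [Nat.mod_eq_of_lt (by omega), Nat.mod_eq_of_lt (by omega)] at h2
    exact Fin.ext h2
  have hs_inj_a : ∀ i : Fin n, ∀ a a' : Fin m, s a i = s a' i → a = a' := by
    intro i a a' h
    have h' : ((i : ℕ) + a) % m = ((i : ℕ) + a') % m := congrArg Fin.val h
    have h2 : (a : ℕ) % m = (a' : ℕ) % m := Nat.ModEq.add_left_cancel' _ h'
    rw [Nat.mod_eq_of_lt a.2, Nat.mod_eq_of_lt a'.2] at h2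
    exact Fin.ext h2
  -- the orthonormal image families
  set g : Fin m × Fin n → Fin n → K := fun p i => ω ^ ((p.2 : ℕ) * (i : ℕ)) • f (s p.1 i) with hg
  have hfo := orthonormal_iff_ite.mp f.orthonormal
  have hg_on : ∀ p, Orthonormal ℂ (g p) := by
    intro p
    rw [orthonormal_iff_ite]
    intro i j
    simp only [hg, inner_smul_left, inner_smul_right]
    rcases eq_or_ne i j with rfl | hij
    · simp only [hfo, eq_self_iff_true, if_true, mul_one]
      rw [mul_comm]; exact hωabs _
    · have hne : s p.1 i ≠ s p.1 j := fun hh => hij (hs_inj_i _ _ _ hh)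
      simp [hfo, hne, hij]
  set W : Fin m × Fin n → (H →ₗ[ℂ] K) := fun p => e.toBasis.constr ℂ (g p) with hW
  have hWe : ∀ p i, W p (e i) = g p i := by
    intro p i
    rw [hW]
    simpa using e.toBasis.constr_basis ℂ (g p) i
  have hinner : ∀ p x y, ⟪W p x, W p y⟫_ℂ = ⟪x, y⟫_ℂ := by
    intro p x y
    have hx := e.sum_repr x
    have hy := e.sum_repr y
    conv_lhs => rw [← hx, ← hy]
    conv_rhs => rw [← hx, ← hy]
    rw [map_sum, map_sum]
    simp_rw [map_smul, hWe]
    rw [(hg_on p).inner_sum, e.orthonormal.inner_sum]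
  have hadj : ∀ p, (LinearMap.adjoint (W p)) ∘ₗ (W p) = LinearMap.id := by
    intro p
    apply LinearMap.ext; intro x
    refine ext_inner_left ℂ fun v => ?_
    rw [LinearMap.comp_apply, LinearMap.adjoint_inner_right, hinner, LinearMap.id_apply]
  have hli : LinearIndependent ℂ W := by
    rw [Fintype.linearIndependent_iff]
    intro c hc
    rintro ⟨a, b⟩
    have key : ∀ i : Fin n, ∑ b' : Fin n, c (a, b') * (ω ^ (b' : ℕ)) ^ (i : ℕ) = 0 := by
      intro i
      have h0 : (∑ p, c p • W p) (e i) = 0 := by rw [hc]; rfl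
      have h1 : ⟪f (s a i), (∑ p, c p • W p) (e i)⟫_ℂ = 0 := by rw [h0, inner_zero_right]
      rw [LinearMap.sum_apply] at h1
      simp_rw [LinearMap.smul_apply, hWe, hg, inner_sum, inner_smul_right] at h1
      rw [Fintype.sum_prod_type] at h1
      simp_rw [hfo] at h1
      have hite : ∀ (a' : Fin m),
          (if s a i = s a' i then (1 : ℂ) else 0) = if a' = a then 1 else 0 := by
        intro a'
        by_cases hh : a' = a
        · subst hh; simp
        · have : s a i ≠ s a' i := fun hh2 => hh (hs_inj_a i a' a hh2.symm)
          simp [hh, this]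
      simp_rw [hite] at h1
      rw [Finset.sum_comm] at h1
      simp only [mul_ite, mul_one, mul_zero, Finset.sum_ite_eq', Finset.mem_univ, if_true] at h1
      calc ∑ b' : Fin n, c (a, b') * (ω ^ (b' : ℕ)) ^ (i : ℕ)
          = ∑ b' : Fin n, c (a, b') * ω ^ ((b' : ℕ) * (i : ℕ)) := by
            simp_rw [pow_mul]
        _ = 0 := h1
    have hVt : ((Matrix.vandermonde fun b' : Fin n => ω ^ (b' : ℕ)).transpose).det ≠ 0 := by
      rw [Matrix.det_transpose, Matrix.det_vandermonde_ne_zero_iff]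
      intro b1 b2 hb
      exact Fin.ext (hωprim.pow_inj b1.2 b2.2 hb)
    have hz := Matrix.eq_zero_of_mulVec_eq_zero hVt (v := fun b' => c (a, b')) ?_
    · exact congrFun hz b
    · funext i
      simpa [Matrix.mulVec, Matrix.vandermonde, dotProduct, mul_comm] using key i
  exact ⟨W, hli, hadj⟩

end Aux

/-- If `dim H = n ≤ m = dim K` and `1 ≤ r ≤ m*n`, there exist
linearly independent operators `v₁,…,v_r : H → K` with `∑ vₖ* vₖ = 1_H`. -/
theorem exists_linearIndependent_sum_adjoint_comp_eq_one
    {H K : Type*} [NormedAddCommGroup H] [InnerProductSpace ℂ H]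
    [FiniteDimensional ℂ H] [NormedAddCommGroup K] [InnerProductSpace ℂ K]
    [FiniteDimensional ℂ K]
    (hnm : Module.finrank ℂ H ≤ Module.finrank ℂ K)
    (r : ℕ) (hr1 : 1 ≤ r) (hr2 : r ≤ Module.finrank ℂ K * Module.finrank ℂ H) :
    ∃ v : Fin r → (H →ₗ[ℂ] K), LinearIndependent ℂ v ∧
      ∑ k, (LinearMap.adjoint (v k)) ∘ₗ (v k) = LinearMap.id := by
  classical
  set n := Module.finrank ℂ H with hn'
  set m := Module.finrank ℂ K with hm'
  have hn : 0 < n := by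
    rcases Nat.eq_zero_or_pos n with h | h
    · rw [h, mul_zero] at hr2; omega
    · exact h
  have hm : 0 < m := lt_of_lt_of_le hn hnm
  obtain ⟨W, hWli, hWadj⟩ := exists_family_aux n m hn hm hnm
    (stdOrthonormalBasis ℂ H) (stdOrthonormalBasis ℂ K)
  obtain ⟨σ⟩ : Nonempty (Fin r ↪ Fin (m * n)) := Fin.nonempty_embedding_iff.mpr hr2
  let τ : Fin r ↪ Fin m × Fin n := σ.trans finProdFinEquiv.symm.toEmbedding
  have hr0 : (0 : ℝ) < Real.sqrt r := Real.sqrt_pos.mpr (by exact_mod_cast hr1)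
  set c0 : ℂ := (((Real.sqrt r)⁻¹ : ℝ) : ℂ) with hc0
  have hc0ne : c0 ≠ 0 := by
    simp only [hc0, ne_eq, Complex.ofReal_eq_zero, inv_eq_zero]
    exact hr0.ne'
  have hc0sq : (starRingEnd ℂ) c0 * c0 = ((r : ℂ))⁻¹ := by
    rw [hc0, Complex.conj_ofReal, ← Complex.ofReal_mul, ← mul_inv,
      Real.mul_self_sqrt (by positivity)]
    push_cast
    ring
  refine ⟨fun k => c0 • W (τ k), ?_, ?_⟩
  · have := (hWli.comp τ τ.injective).units_smul
      (fun _ => Units.mk0 c0 hc0ne)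
    exact this
  · have hterm : ∀ k : Fin r,
        (LinearMap.adjoint (c0 • W (τ k))) ∘ₗ (c0 • W (τ k))
          = ((r : ℂ))⁻¹ • (LinearMap.id : H →ₗ[ℂ] H) := by
      intro k
      rw [map_smulₛₗ]
      rw [LinearMap.smul_comp, LinearMap.comp_smul, smul_smul, hWadj, hc0sq]
    rw [Finset.sum_congr rfl (fun k _ => hterm k), Finset.sum_const, Finset.card_univ,
      Fintype.card_fin, ← Nat.cast_smul_eq_nsmul ℂ, smul_smul,
      mul_inv_cancel₀ (Nat.cast_ne_zero.mpr (by omega) : (r : ℂ) ≠ 0), one_smul]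
end

section
/- Let H, K be finite-dimensional complex Hilbert spaces with n = dim H ≥ 2 and dim K ≥ n, and let r be an integer with 1 ≤ r ≤ n/2. Then there exist operators v₁,…,v_r ∈ B(H,K) with v₁*v₁ + ⋯ + v_r*v_r = 1_H such that the restriction of v₁* ∧ ⋯ ∧ v_r* to the symmetric subspace of K^{⊗r} has rank at least 2. -/
open scoped TensorProduct

/-- The alternating average `w₁ ∧ ⋯ ∧ w_r` as an operator `K^{⊗r} → H^{⊗r}`. -/
noncomputable def opWedge {K H : Type*} [NormedAddCommGroup K] [InnerProductSpace ℂ K]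
    [NormedAddCommGroup H] [InnerProductSpace ℂ H] (r : ℕ)
    (w : Fin r → (K →ₗ[ℂ] H)) :
    (⨂[ℂ] _ : Fin r, K) →ₗ[ℂ] (⨂[ℂ] _ : Fin r, H) :=
  (r.factorial : ℂ)⁻¹ • ∑ π : Equiv.Perm (Fin r),
    (((Equiv.Perm.sign π : ℤ) : ℂ)) • PiTensorProduct.map (fun i => w (π i))

/-- The symmetric subspace of `K^{⊗r}`: permutation-invariant tensors. -/
noncomputable def symmSubspace (K : Type*) [NormedAddCommGroup K]
    [InnerProductSpace ℂ K] (r : ℕ) : Submodule ℂ (⨂[ℂ] _ : Fin r, K) :=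
  ⨅ π : Equiv.Perm (Fin r),
    LinearMap.ker ((PiTensorProduct.reindex ℂ (fun _ : Fin r => K) π).toLinearMap
      - LinearMap.id)

instance piTensorFinFinite (r : ℕ) (M : Type*) [AddCommGroup M] [Module ℂ M]
    [Module.Finite ℂ M] : Module.Finite ℂ (⨂[ℂ] _ : Fin r, M) := by
  induction r with
  | zero => exact Module.Finite.equiv (PiTensorProduct.isEmptyEquiv (Fin 0)).symm
  | succ r ih =>
    have h1 : Module.Finite ℂ (⨂[ℂ] _ : Fin 1, M) :=
      Module.Finite.equiv (PiTensorProduct.subsingletonEquiv (0 : Fin 1)).symm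
    have h2 : Module.Finite ℂ ((⨂[ℂ] _ : Fin r, M) ⊗[ℂ] (⨂[ℂ] _ : Fin 1, M)) :=
      Module.Finite.tensorProduct _ _ _
    exact Module.Finite.equiv
      ((PiTensorProduct.tmulEquiv (ι := Fin r) (ι₂ := Fin 1) ℂ M).trans
        (PiTensorProduct.reindex ℂ (fun _ : Fin r ⊕ Fin 1 => M) finSumFinEquiv))

open scoped InnerProductSpace in
/-- If `n = dim H ≥ 2`, `dim K ≥ n` and `1 ≤ r ≤ n/2`, then there
exist `v₁,…,v_r : H → K` with `∑ vₖ* vₖ = 1_H` such that the restriction of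
`v₁* ∧ ⋯ ∧ v_r*` to the symmetric subspace of `K^{⊗r}` has rank at least 2. -/
theorem exists_tuple_with_wedge_rank_ge_two
    {H K : Type*} [NormedAddCommGroup H] [InnerProductSpace ℂ H]
    [FiniteDimensional ℂ H] [NormedAddCommGroup K] [InnerProductSpace ℂ K]
    [FiniteDimensional ℂ K]
    (hn : 2 ≤ Module.finrank ℂ H)
    (hnm : Module.finrank ℂ H ≤ Module.finrank ℂ K)
    (r : ℕ) (hr1 : 1 ≤ r) (hr2 : 2 * r ≤ Module.finrank ℂ H) :
    ∃ v : Fin r → (H →ₗ[ℂ] K),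
      (∑ k, (LinearMap.adjoint (v k)) ∘ₗ (v k)) = LinearMap.id ∧
      2 ≤ Module.finrank ℂ
        ((symmSubspace K r).map (opWedge r (fun k => LinearMap.adjoint (v k)))) := by
  classical
  set n := Module.finrank ℂ H with hnH
  set m := Module.finrank ℂ K with hmK
  let bH : OrthonormalBasis (Fin n) ℂ H := stdOrthonormalBasis ℂ H
  let bK : OrthonormalBasis (Fin m) ℂ K := stdOrthonormalBasis ℂ K
  have hinH : ∀ i j : Fin n, ⟪(bH i : H), (bH j : H)⟫_ℂ = if i = j then 1 else 0 :=
    fun i j => orthonormal_iff_ite.mp bH.orthonormal i j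
  have hinK : ∀ i j : Fin m, ⟪(bK i : K), (bK j : K)⟫_ℂ = if i = j then 1 else 0 :=
    fun i j => orthonormal_iff_ite.mp bK.orthonormal i j
  -- index bookkeeping
  let a : Fin r → Fin n := fun k => ⟨2 * (k : ℕ), by have := k.2; omega⟩
  let b : Fin r → Fin n := fun k => ⟨2 * (k : ℕ) + 1, by have := k.2; omega⟩
  let c : Fin n → Fin r := fun i => ⟨min ((i : ℕ) / 2) (r - 1), by omega⟩
  have hca : ∀ k, c (a k) = k := by
    intro k; have := k.2; apply Fin.ext; simp only [a, c]; omega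
  have hcb : ∀ k, c (b k) = k := by
    intro k; have := k.2; apply Fin.ext; simp only [b, c]; omega
  have ha : Function.Injective a := by
    intro i j h; apply Fin.ext; have := congrArg Fin.val h; simp only [a] at this; omega
  have hb : Function.Injective b := by
    intro i j h; apply Fin.ext; have := congrArg Fin.val h; simp only [b] at this; omega
  have hab : ∀ i j, a i ≠ b j := by
    intro i j h; have := congrArg Fin.val h; simp only [a, b] at this; omega
  have hba : ∀ i j, b i ≠ a j := fun i j h => hab j i h.symm
  let u : Fin n → Fin m := Fin.castLE hnm
  -- the operators
  let v : Fin r → (H →ₗ[ℂ] K) := fun k =>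
    bH.toBasis.constr ℂ (fun i => if c i = k then (bK (u i) : K) else 0)
  have hv : ∀ k i, v k (bH i) = if c i = k then (bK (u i) : K) else 0 := by
    intro k i
    have := bH.toBasis.constr_basis ℂ (fun i => if c i = k then (bK (u i) : K) else 0) i
    rwa [OrthonormalBasis.coe_toBasis] at this
  let w : Fin r → (K →ₗ[ℂ] H) := fun k =>
    bK.toBasis.constr ℂ (fun j =>
      if h : (j : ℕ) < n then (if c ⟨j, h⟩ = k then (bH ⟨j, h⟩ : H) else 0) else 0)
  have hwapp : ∀ k j, w k (bK j) =
      if h : (j : ℕ) < n then (if c ⟨j, h⟩ = k then (bH ⟨j, h⟩ : H) else 0) else 0 := by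
    intro k j
    have := bK.toBasis.constr_basis ℂ (fun j =>
      if h : (j : ℕ) < n then (if c ⟨j, h⟩ = k then (bH ⟨j, h⟩ : H) else 0) else 0) j
    rwa [OrthonormalBasis.coe_toBasis] at this
  have hwu : ∀ k (i : Fin n), w k (bK (u i)) = if c i = k then (bH i : H) else 0 := by
    intro k i
    rw [hwapp]
    have hi : ((u i : Fin m) : ℕ) < n := by simpa [u] using i.2
    rw [dif_pos hi]
    have : (⟨((u i : Fin m) : ℕ), hi⟩ : Fin n) = i := by apply Fin.ext; simp [u]
    rw [this]
  have hw : ∀ k, w k = LinearMap.adjoint (v k) := by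
    intro k
    rw [LinearMap.eq_adjoint_iff_basis bK.toBasis bH.toBasis]
    intro j i
    simp only [OrthonormalBasis.coe_toBasis]
    rw [hwapp, hv]
    by_cases hj : (j : ℕ) < n
    · rw [dif_pos hj]
      by_cases hji : (⟨j, hj⟩ : Fin n) = i
      · subst hji
        have huj : u (⟨j, hj⟩ : Fin n) = j := by apply Fin.ext; simp [u]
        by_cases hc : c (⟨j, hj⟩ : Fin n) = k
        · rw [if_pos hc, if_pos hc, hinH, hinK, if_pos rfl, if_pos huj.symm]
        · rw [if_neg hc, if_neg hc, inner_zero_left, inner_zero_right]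
      · by_cases hc : c i = k
        · rw [if_pos hc]
          have : j ≠ u i := by
            intro h; apply hji; apply Fin.ext
            have := congrArg Fin.val h; simpa [u] using this
          rw [hinK, if_neg this]
          by_cases hc2 : c (⟨j, hj⟩ : Fin n) = k
          · rw [if_pos hc2, hinH, if_neg hji]
          · rw [if_neg hc2, inner_zero_left]
        · rw [if_neg hc, inner_zero_right]
          by_cases hc2 : c (⟨j, hj⟩ : Fin n) = k
          · rw [if_pos hc2, hinH, if_neg hji]
          · rw [if_neg hc2, inner_zero_left]
    · rw [dif_neg hj, inner_zero_left]
      by_cases hc : c i = k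
      · rw [if_pos hc]
        have : j ≠ u i := by
          intro h; apply hj
          have := congrArg Fin.val h; simp only [u, Fin.coe_castLE] at this
          omega
        rw [hinK, if_neg this]
      · rw [if_neg hc, inner_zero_right]
  -- the sum condition
  have hsum : (∑ k, (LinearMap.adjoint (v k)) ∘ₗ (v k)) = LinearMap.id := by
    apply bH.toBasis.ext
    intro i
    simp only [LinearMap.coe_sum, Finset.sum_apply, LinearMap.comp_apply,
      OrthonormalBasis.coe_toBasis, LinearMap.id_apply]
    have : ∀ k : Fin r, (LinearMap.adjoint (v k)) (v k (bH i)) =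
        if c i = k then (bH i : H) else 0 := by
      intro k
      rw [← hw, hv]
      by_cases hc : c i = k
      · simp [hc, hwu]
      · simp [hc]
    rw [Finset.sum_congr rfl (fun k _ => this k)]
    simp
  refine ⟨v, hsum, ?_⟩
  -- rewrite the wedge map in terms of w
  have hwfun : (fun k => LinearMap.adjoint (v k)) = w := by
    funext k; exact (hw k).symm
  rw [hwfun]
  -- the two symmetric vectors
  let gA : K := ∑ k, (bK (u (a k)) : K)
  let gB : K := ∑ k, (bK (u (b k)) : K)
  have hwgA : ∀ k, w k gA = bH (a k) := by
    intro k
    simp only [gA, map_sum, hwu]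
    rw [Finset.sum_congr rfl (fun k' _ => by rw [hca k'])]
    simp
  have hwgB : ∀ k, w k gB = bH (b k) := by
    intro k
    simp only [gB, map_sum, hwu]
    rw [Finset.sum_congr rfl (fun k' _ => by rw [hcb k'])]
    simp
  let xA : ⨂[ℂ] _ : Fin r, K := PiTensorProduct.tprod ℂ (fun _ => gA)
  let xB : ⨂[ℂ] _ : Fin r, K := PiTensorProduct.tprod ℂ (fun _ => gB)
  have hsymm : ∀ g : K, (PiTensorProduct.tprod ℂ (fun _ : Fin r => g)) ∈ symmSubspace K r := by
    intro g
    simp only [symmSubspace, Submodule.mem_iInf, LinearMap.mem_ker, LinearMap.sub_apply,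
      LinearMap.id_apply, LinearEquiv.coe_coe, sub_eq_zero]
    intro π
    rw [PiTensorProduct.reindex_tprod]
  -- the images
  let y : (Fin r → Fin n) → (⨂[ℂ] _ : Fin r, H) := fun d =>
    (r.factorial : ℂ)⁻¹ • ∑ π : Equiv.Perm (Fin r),
      (((Equiv.Perm.sign π : ℤ) : ℂ)) • PiTensorProduct.tprod ℂ (fun i => (bH (d (π i)) : H))
  have hyA : opWedge r w xA = y a := by
    simp only [opWedge, y, xA, LinearMap.smul_apply, LinearMap.coe_sum, Finset.sum_apply,
      LinearMap.smul_apply, PiTensorProduct.map_tprod, hwgA]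
  have hyB : opWedge r w xB = y b := by
    simp only [opWedge, y, xB, LinearMap.smul_apply, LinearMap.coe_sum, Finset.sum_apply,
      LinearMap.smul_apply, PiTensorProduct.map_tprod, hwgB]
  -- the dual functionals
  let φ : (Fin r → Fin n) → ((⨂[ℂ] _ : Fin r, H) →ₗ[ℂ] ℂ) := fun d =>
    PiTensorProduct.lift ((MultilinearMap.mkPiAlgebra ℂ (Fin r) ℂ).compLinearMap
      (fun i => (innerSL ℂ (bH (d i) : H)).toLinearMap))
  have hφt : ∀ d (f : Fin r → H), φ d (PiTensorProduct.tprod ℂ f) =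
      ∏ i, ⟪(bH (d i) : H), f i⟫_ℂ := by
    intro d f
    simp [φ, PiTensorProduct.lift.tprod]
  have hfact : (r.factorial : ℂ)⁻¹ ≠ 0 :=
    inv_ne_zero (Nat.cast_ne_zero.mpr r.factorial_ne_zero)
  have hself : ∀ d : Fin r → Fin n, Function.Injective d →
      φ d (y d) = (r.factorial : ℂ)⁻¹ := by
    intro d hd
    simp only [y, map_smul, map_sum, hφt]
    have hterm : ∀ π : Equiv.Perm (Fin r),
        (∏ i, ⟪(bH (d i) : H), (bH (d (π i)) : H)⟫_ℂ) = if π = 1 then 1 else 0 := by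
      intro π
      by_cases hπ : π = 1
      · subst hπ; simp [hinH]
      · obtain ⟨i, hi⟩ : ∃ i, π i ≠ i := by
          by_contra hcon; push_neg at hcon
          exact hπ (Equiv.ext fun x => hcon x)
        rw [if_neg hπ]
        refine Finset.prod_eq_zero (Finset.mem_univ i) ?_
        rw [hinH, if_neg (fun hcon => hi (hd hcon).symm)]
    rw [Finset.sum_congr rfl (fun π _ => by rw [hterm π])]
    simp
  have hcross : ∀ d e : Fin r → Fin n, (∀ i j, d i ≠ e j) → φ d (y e) = 0 := by
    intro d e hde
    simp only [y, map_smul, map_sum, hφt]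
    have hterm : ∀ π : Equiv.Perm (Fin r),
        (∏ i, ⟪(bH (d i) : H), (bH (e (π i)) : H)⟫_ℂ) = 0 := by
      intro π
      refine Finset.prod_eq_zero (Finset.mem_univ (⟨0, hr1⟩ : Fin r)) ?_
      rw [hinH, if_neg (hde _ _)]
    rw [Finset.sum_congr rfl (fun π _ => by rw [hterm π])]
    simp
  -- linear independence and rank
  have hAmem : y a ∈ (symmSubspace K r).map (opWedge r w) := ⟨xA, hsymm gA, hyA⟩
  have hBmem : y b ∈ (symmSubspace K r).map (opWedge r w) := ⟨xB, hsymm gB, hyB⟩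
  have hind : LinearIndependent ℂ ![y a, y b] := by
    rw [LinearIndependent.pair_iff]
    intro s t hst
    have h1 := congrArg (φ a) hst
    have h2 := congrArg (φ b) hst
    simp only [map_add, map_smul, hself a ha, hself b hb, hcross a b hab, hcross b a hba,
      smul_eq_mul, mul_zero, add_zero, zero_add, map_zero] at h1 h2
    exact ⟨by simpa [hfact] using h1, by simpa [hfact] using h2⟩
  have hspan : Submodule.span ℂ (Set.range ![y a, y b]) ≤
      (symmSubspace K r).map (opWedge r w) := by
    rw [Submodule.span_le, Set.range_subset_iff]
    intro i
    fin_cases i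
    · exact hAmem
    · exact hBmem
  calc (2 : ℕ) = Module.finrank ℂ (Submodule.span ℂ (Set.range ![y a, y b])) := by
        rw [finrank_span_eq_card hind]; simp
    _ ≤ _ := Submodule.finrank_mono hspan
end

section
/- Let H, K, K₀ be finite-dimensional complex Hilbert spaces, let ξ ∈ K₀ ⊗ H be a unit vector cyclic for 1_{K₀} ⊗ B(H) representing a state ω of B(H) (i.e. ω(b) = ⟨(1⊗b)ξ,ξ⟩), and let ρ be a state of B(K⊗H) extending ω whose density operator has range R. Then for every ζ ∈ R there is a unique linear operator v : K₀ → K with (v ⊗ 1_H)ξ = ζ, and the map v ↦ (v⊗1_H)ξ is a linear isomorphism from the operator space S = {v ∈ B(K₀,K) : (v⊗1_H)ξ ∈ R} onto R. In particular rank ρ = dim S. -/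
open scoped ComplexInnerProductSpace

/-- A realization of the Hilbert-space tensor product `K ⊗ H` as a Hilbert
space `W`. -/
structure HilbertTensor (K H W : Type*)
    [NormedAddCommGroup K] [InnerProductSpace ℂ K]
    [NormedAddCommGroup H] [InnerProductSpace ℂ H]
    [NormedAddCommGroup W] [InnerProductSpace ℂ W] where
  tm : K →ₗ[ℂ] H →ₗ[ℂ] W
  inner_tm : ∀ (ξ₁ ξ₂ : K) (η₁ η₂ : H),
    (⟪tm ξ₁ η₁, tm ξ₂ η₂⟫ : ℂ) = ⟪ξ₁, ξ₂⟫ * ⟪η₁, η₂⟫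
  span_tm : Submodule.span ℂ {w : W | ∃ ξ η, w = tm ξ η} = ⊤

/-- `Tb` realizes `1_K ⊗ b` on `W ≅ K ⊗ H`. -/
def IsRightTensor {K H W : Type*}
    [NormedAddCommGroup K] [InnerProductSpace ℂ K]
    [NormedAddCommGroup H] [InnerProductSpace ℂ H]
    [NormedAddCommGroup W] [InnerProductSpace ℂ W]
    (T : HilbertTensor K H W) (b : H →ₗ[ℂ] H) (Tb : W →ₗ[ℂ] W) : Prop :=
  ∀ (ξ : K) (η : H), Tb (T.tm ξ η) = T.tm ξ (b η)

/-- `Vop` realizes `v ⊗ 1_H : K₀ ⊗ H → K ⊗ H`. -/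
def IsLeftTensor {K₀ K H W₀ W₁ : Type*}
    [NormedAddCommGroup K₀] [InnerProductSpace ℂ K₀]
    [NormedAddCommGroup K] [InnerProductSpace ℂ K]
    [NormedAddCommGroup H] [InnerProductSpace ℂ H]
    [NormedAddCommGroup W₀] [InnerProductSpace ℂ W₀]
    [NormedAddCommGroup W₁] [InnerProductSpace ℂ W₁]
    (T₀ : HilbertTensor K₀ H W₀) (T₁ : HilbertTensor K H W₁)
    (v : K₀ →ₗ[ℂ] K) (Vop : W₀ →ₗ[ℂ] W₁) : Prop :=
  ∀ (k : K₀) (η : H), Vop (T₀.tm k η) = T₁.tm (v k) η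

set_option linter.unusedSectionVars false
set_option maxHeartbeats 1000000

section Helpers

variable {K H W : Type*}
  [NormedAddCommGroup K] [InnerProductSpace ℂ K] [FiniteDimensional ℂ K]
  [NormedAddCommGroup H] [InnerProductSpace ℂ H] [FiniteDimensional ℂ H]
  [NormedAddCommGroup W] [InnerProductSpace ℂ W] [FiniteDimensional ℂ W]

/-- The partial inner product `⟨k| ⊗ 1 : W → H`. -/
noncomputable def HilbertTensor.coord (T : HilbertTensor K H W) (k : K) : W →ₗ[ℂ] H :=
  LinearMap.adjoint (T.tm k)

lemma HilbertTensor.coord_tm (T : HilbertTensor K H W) (k k' : K) (η : H) :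
    T.coord k (T.tm k' η) = (⟪k, k'⟫ : ℂ) • η := by
  apply ext_inner_right ℂ
  intro z
  rw [HilbertTensor.coord, LinearMap.adjoint_inner_left, T.inner_tm, inner_smul_left,
    inner_conj_symm]

lemma HilbertTensor.sum_coord (T : HilbertTensor K H W) {ι : Type*} [Fintype ι]
    (e : OrthonormalBasis ι ℂ K) (w : W) :
    ∑ i, T.tm (e i) (T.coord (e i) w) = w := by
  have : (∑ i, (T.tm (e i)) ∘ₗ (T.coord (e i))) = LinearMap.id (R := ℂ) (M := W) := by
    apply LinearMap.ext_on T.span_tm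
    rintro x ⟨k, η, rfl⟩
    simp only [LinearMap.sum_apply, LinearMap.comp_apply, LinearMap.id_apply,
      HilbertTensor.coord_tm, map_smul]
    have : ∀ i, (⟪e i, k⟫ : ℂ) • T.tm (e i) η = T.tm ((⟪e i, k⟫ : ℂ) • e i) η := by
      intro i; rw [map_smul]; rfl
    rw [Finset.sum_congr rfl (fun i _ => this i)]
    rw [← LinearMap.sum_apply, ← map_sum, e.sum_repr' k]
  simpa using congrArg (fun f => f w) this

lemma HilbertTensor.inner_eq_sum_coord (T : HilbertTensor K H W) {ι : Type*} [Fintype ι]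
    (e : OrthonormalBasis ι ℂ K) (x y : W) :
    (⟪x, y⟫ : ℂ) = ∑ i, ⟪T.coord (e i) x, T.coord (e i) y⟫ := by
  conv_lhs => rw [← T.sum_coord e y]
  rw [inner_sum]
  refine Finset.sum_congr rfl (fun i _ => ?_)
  rw [HilbertTensor.coord, LinearMap.adjoint_inner_left]

end Helpers

section Ops

variable {K₀ K H W₀ W₁ : Type*}
  [NormedAddCommGroup K₀] [InnerProductSpace ℂ K₀] [FiniteDimensional ℂ K₀]
  [NormedAddCommGroup K] [InnerProductSpace ℂ K] [FiniteDimensional ℂ K]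
  [NormedAddCommGroup H] [InnerProductSpace ℂ H] [FiniteDimensional ℂ H]
  [NormedAddCommGroup W₀] [InnerProductSpace ℂ W₀] [FiniteDimensional ℂ W₀]
  [NormedAddCommGroup W₁] [InnerProductSpace ℂ W₁] [FiniteDimensional ℂ W₁]

/-- Realization of `v ⊗ 1`. -/
noncomputable def leftOp (T₀ : HilbertTensor K₀ H W₀) (T₁ : HilbertTensor K H W₁)
    {ι : Type*} [Fintype ι] (e : OrthonormalBasis ι ℂ K₀) (v : K₀ →ₗ[ℂ] K) :
    W₀ →ₗ[ℂ] W₁ :=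
  ∑ i, (T₁.tm (v (e i))) ∘ₗ (T₀.coord (e i))

lemma leftOp_isLeftTensor (T₀ : HilbertTensor K₀ H W₀) (T₁ : HilbertTensor K H W₁)
    {ι : Type*} [Fintype ι] (e : OrthonormalBasis ι ℂ K₀) (v : K₀ →ₗ[ℂ] K) :
    IsLeftTensor T₀ T₁ v (leftOp T₀ T₁ e v) := by
  intro k η
  simp only [leftOp, LinearMap.sum_apply, LinearMap.comp_apply, HilbertTensor.coord_tm,
    map_smul]
  have step : ∀ i, (⟪e i, k⟫ : ℂ) • T₁.tm (v (e i)) η = T₁.tm (v ((⟪e i, k⟫ : ℂ) • e i)) η := by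
    intro i; rw [map_smul, map_smul]; rfl
  rw [Finset.sum_congr rfl (fun i _ => step i)]
  have : ∀ i, T₁.tm (v ((⟪e i, k⟫ : ℂ) • e i)) η
      = ((T₁.tm.flip η) ∘ₗ v) ((⟪e i, k⟫ : ℂ) • e i) := by
    intro i; rfl
  rw [Finset.sum_congr rfl (fun i _ => this i), ← map_sum, e.sum_repr' k]
  rfl

lemma isLeftTensor_unique (T₀ : HilbertTensor K₀ H W₀) (T₁ : HilbertTensor K H W₁)
    (v : K₀ →ₗ[ℂ] K) {V V' : W₀ →ₗ[ℂ] W₁}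
    (h1 : IsLeftTensor T₀ T₁ v V) (h2 : IsLeftTensor T₀ T₁ v V') : V = V' := by
  apply LinearMap.ext_on T₀.span_tm
  rintro x ⟨k, η, rfl⟩
  rw [h1, h2]

/-- Realization of `1 ⊗ b`. -/
noncomputable def rightOp (T : HilbertTensor K H W₁) {ι : Type*} [Fintype ι]
    (f : OrthonormalBasis ι ℂ K) (b : H →ₗ[ℂ] H) : W₁ →ₗ[ℂ] W₁ :=
  ∑ i, (T.tm (f i)) ∘ₗ b ∘ₗ (T.coord (f i))

lemma rightOp_isRightTensor (T : HilbertTensor K H W₁) {ι : Type*} [Fintype ι]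
    (f : OrthonormalBasis ι ℂ K) (b : H →ₗ[ℂ] H) :
    IsRightTensor T b (rightOp T f b) := by
  intro k η
  simp only [rightOp, LinearMap.sum_apply, LinearMap.comp_apply, HilbertTensor.coord_tm,
    map_smul]
  have step : ∀ i, (⟪f i, k⟫ : ℂ) • T.tm (f i) (b η) = ((T.tm.flip (b η))) ((⟪f i, k⟫ : ℂ) • f i) := by
    intro i; rw [map_smul]; rfl
  rw [Finset.sum_congr rfl (fun i _ => step i), ← map_sum, f.sum_repr' k]
  rfl

lemma coord_rightOp (T : HilbertTensor K H W₁) {ι : Type*} [Fintype ι] [DecidableEq ι]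
    (f : OrthonormalBasis ι ℂ K) (b : H →ₗ[ℂ] H) (j : ι) (w : W₁) :
    T.coord (f j) (rightOp T f b w) = b (T.coord (f j) w) := by
  simp only [rightOp, LinearMap.sum_apply, LinearMap.comp_apply, map_sum,
    HilbertTensor.coord_tm]
  have horth := orthonormal_iff_ite.mp f.orthonormal
  rw [Finset.sum_congr rfl (fun i _ => by rw [horth j i])]
  simp [Finset.sum_ite_eq, ite_smul]

end Ops
set_option linter.unusedSectionVars false

section Quad

lemma quad_nonneg_zero {a b : ℝ} (ha : 0 ≤ a) (h : ∀ t : ℝ, 0 ≤ a * t ^ 2 + b * t) :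
    b = 0 := by
  by_contra hb
  have habs : 0 < |b| := abs_pos.mpr hb
  set t := |b| / (2 * a + 2) with ht
  have htpos : 0 < t := by positivity
  have h1 := h t
  have h2 := h (-t)
  have hbt : |b * t| ≤ a * t ^ 2 := by
    rw [abs_mul, abs_of_pos htpos]
    rcases abs_cases b with ⟨hb1, _⟩ | ⟨hb1, _⟩
    · rw [hb1]; nlinarith
    · rw [hb1]; nlinarith
  have : |b| * t ≤ a * t ^ 2 := by rwa [abs_mul, abs_of_pos htpos] at hbt
  have h3 : |b| ≤ a * t := by
    have := (div_le_div_iff_of_pos_right htpos).mpr this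
    calc |b| = |b| * t / t := by field_simp
    _ ≤ a * t ^ 2 / t := by apply div_le_div_of_nonneg_right <;> nlinarith
    _ = a * t := by field_simp [pow_two]
  rw [ht] at h3
  have : a / (2 * a + 2) < 1 := by
    rw [div_lt_one (by linarith)]; linarith
  have : a * (|b| / (2 * a + 2)) = (a / (2*a+2)) * |b| := by ring
  nlinarith [h3]

end Quad

section Pos

variable {E : Type*} [NormedAddCommGroup E] [InnerProductSpace ℂ E]

/-- A positive symmetric operator vanishing on the diagonal at `x` kills `x`. -/
lemma pos_symm_inner_self_zero (D : E →ₗ[ℂ] E)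
    (hsym : ∀ x y : E, (⟪D x, y⟫ : ℂ) = ⟪x, D y⟫)
    (hpos : ∀ x : E, 0 ≤ (⟪D x, x⟫ : ℂ).re)
    {x : E} (hx : (⟪D x, x⟫ : ℂ) = 0) : D x = 0 := by
  have key : ∀ y : E, (⟪D x, y⟫ : ℂ).re = 0 := by
    intro y
    have key2 : (2 : ℝ) * (⟪D x, y⟫ : ℂ).re = 0 := by
      apply quad_nonneg_zero (hpos y)
      intro t
      have expand : (⟪D (x + (t : ℂ) • y), x + (t : ℂ) • y⟫ : ℂ)
          = (t : ℂ) ^ 2 * ⟪D y, y⟫ + (t : ℂ) * (⟪D x, y⟫ + ⟪y, D x⟫) := by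
        rw [map_add, map_smul, inner_add_left, inner_add_right, inner_add_right,
          inner_smul_left, inner_smul_right, inner_smul_left, inner_smul_right, hx,
          hsym y x]
        simp [Complex.conj_ofReal]
        ring
      have him : (⟪D x, y⟫ : ℂ) + ⟪y, D x⟫ = ((2 * (⟪D x, y⟫ : ℂ).re : ℝ) : ℂ) := by
        rw [← inner_conj_symm y (D x), Complex.add_conj]
      have hre : (⟪D (x + (t : ℂ) • y), x + (t : ℂ) • y⟫ : ℂ).re
          = (⟪D y, y⟫ : ℂ).re * t ^ 2 + 2 * (⟪D x, y⟫ : ℂ).re * t := by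
        rw [expand, him]
        simp [pow_two, Complex.mul_re, Complex.ofReal_re, Complex.ofReal_im]
        ring
      have := hpos (x + (t : ℂ) • y)
      rw [hre] at this
      linarith
    linarith
  have keyC : ∀ y : E, (⟪D x, y⟫ : ℂ) = 0 := by
    intro y
    have h1 := key y
    have h2 := key (Complex.I • y)
    rw [inner_smul_right] at h2
    simp [Complex.mul_re] at h2
    exact Complex.ext h1 h2
  have := keyC (D x)
  rwa [inner_self_eq_zero] at this

end Pos

section Trace

variable {E : Type*} [NormedAddCommGroup E] [InnerProductSpace ℂ E] [FiniteDimensional ℂ E]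

lemma trace_eq_sum_inner' {ι : Type*} [Fintype ι] [DecidableEq ι]
    (b : OrthonormalBasis ι ℂ E) (T : E →ₗ[ℂ] E) :
    LinearMap.trace ℂ E T = ∑ i, ⟪b i, T (b i)⟫ := by
  rw [LinearMap.trace_eq_matrix_trace ℂ b.toBasis, Matrix.trace]
  refine Finset.sum_congr rfl (fun i _ => ?_)
  rw [Matrix.diag_apply, LinearMap.toMatrix_apply, b.coe_toBasis,
    b.coe_toBasis_repr_apply, b.repr_apply_apply]

end Trace

section Phi

variable {K₀ K H W₀ W₁ : Type*}
  [NormedAddCommGroup K₀] [InnerProductSpace ℂ K₀] [FiniteDimensional ℂ K₀]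
  [NormedAddCommGroup K] [InnerProductSpace ℂ K] [FiniteDimensional ℂ K]
  [NormedAddCommGroup H] [InnerProductSpace ℂ H] [FiniteDimensional ℂ H]
  [NormedAddCommGroup W₀] [InnerProductSpace ℂ W₀] [FiniteDimensional ℂ W₀]
  [NormedAddCommGroup W₁] [InnerProductSpace ℂ W₁] [FiniteDimensional ℂ W₁]

/-- The linear map `v ↦ (v ⊗ 1) ξ`. -/
noncomputable def PhiMap (T₀ : HilbertTensor K₀ H W₀) (T₁ : HilbertTensor K H W₁)
    {ι : Type*} [Fintype ι] (e : OrthonormalBasis ι ℂ K₀) (ξ : W₀) :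
    (K₀ →ₗ[ℂ] K) →ₗ[ℂ] W₁ where
  toFun v := leftOp T₀ T₁ e v ξ
  map_add' v w := by
    simp [leftOp, LinearMap.sum_apply, LinearMap.comp_apply, map_add,
      LinearMap.add_apply, Finset.sum_add_distrib]
  map_smul' c v := by
    simp [leftOp, LinearMap.sum_apply, LinearMap.comp_apply, map_smul,
      LinearMap.smul_apply, Finset.smul_sum]

lemma PhiMap_apply (T₀ : HilbertTensor K₀ H W₀) (T₁ : HilbertTensor K H W₁)
    {ι : Type*} [Fintype ι] (e : OrthonormalBasis ι ℂ K₀) (ξ : W₀) (v : K₀ →ₗ[ℂ] K) :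
    PhiMap T₀ T₁ e ξ v = ∑ i, T₁.tm (v (e i)) (T₀.coord (e i) ξ) := by
  simp [PhiMap, leftOp]

lemma PhiMap_eq_leftOp (T₀ : HilbertTensor K₀ H W₀) (T₁ : HilbertTensor K H W₁)
    {ι : Type*} [Fintype ι] (e : OrthonormalBasis ι ℂ K₀) (ξ : W₀) (v : K₀ →ₗ[ℂ] K) :
    PhiMap T₀ T₁ e ξ v = leftOp T₀ T₁ e v ξ := rfl

end Phi

/-- Let `ξ ∈ K₀ ⊗ H` be a unit cyclic vector representing the
state `ω` of `B(H)`, and `ρ` a state of `B(K⊗H)` extending `ω` whose density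
operator has range `R`.  Then every `ζ ∈ R` has the form `(v ⊗ 1_H)ξ` for a
unique `v : K₀ → K`, and `v ↦ (v⊗1_H)ξ` is a linear isomorphism of the
operator space `S = {v : (v⊗1_H)ξ ∈ R}` onto `R`; in particular
`rank ρ = dim S`. -/
theorem extensions_parameterized_by_operators
    {K₀ K H W₀ W₁ : Type*}
    [NormedAddCommGroup K₀] [InnerProductSpace ℂ K₀] [FiniteDimensional ℂ K₀]
    [NormedAddCommGroup K] [InnerProductSpace ℂ K] [FiniteDimensional ℂ K]
    [NormedAddCommGroup H] [InnerProductSpace ℂ H] [FiniteDimensional ℂ H]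
    [NormedAddCommGroup W₀] [InnerProductSpace ℂ W₀] [FiniteDimensional ℂ W₀]
    [NormedAddCommGroup W₁] [InnerProductSpace ℂ W₁] [FiniteDimensional ℂ W₁]
    (T₀ : HilbertTensor K₀ H W₀) (T₁ : HilbertTensor K H W₁)
    (ξ : W₀) (hξ : ‖ξ‖ = 1)
    (hcyc : Submodule.span ℂ {x : W₀ | ∃ (b : H →ₗ[ℂ] H) (Tb : W₀ →ₗ[ℂ] W₀),
        IsRightTensor T₀ b Tb ∧ x = Tb ξ} = ⊤)
    (D : W₁ →ₗ[ℂ] W₁) (hDsa : IsSelfAdjoint D)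
    (hDpos : ∀ x : W₁, 0 ≤ (⟪D x, x⟫ : ℂ).re)
    (hDtr : LinearMap.trace ℂ W₁ D = 1)
    (hext : ∀ (b : H →ₗ[ℂ] H) (Tb₀ : W₀ →ₗ[ℂ] W₀) (Tb₁ : W₁ →ₗ[ℂ] W₁),
      IsRightTensor T₀ b Tb₀ → IsRightTensor T₁ b Tb₁ →
      LinearMap.trace ℂ W₁ (D ∘ₗ Tb₁) = ⟪ξ, Tb₀ ξ⟫) :
    (∀ ζ ∈ LinearMap.range D, ∃! v : K₀ →ₗ[ℂ] K,
      ∃ Vop : W₀ →ₗ[ℂ] W₁, IsLeftTensor T₀ T₁ v Vop ∧ Vop ξ = ζ) ∧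
    ∃ S : Submodule ℂ (K₀ →ₗ[ℂ] K),
      (↑S = {v : K₀ →ₗ[ℂ] K | ∃ Vop : W₀ →ₗ[ℂ] W₁,
          IsLeftTensor T₀ T₁ v Vop ∧ Vop ξ ∈ LinearMap.range D}) ∧
      (∃ e : S ≃ₗ[ℂ] LinearMap.range D, ∀ v : S,
        ∃ Vop : W₀ →ₗ[ℂ] W₁, IsLeftTensor T₀ T₁ (v : K₀ →ₗ[ℂ] K) Vop ∧
          (e v : W₁) = Vop ξ) ∧
      Module.finrank ℂ (LinearMap.range D) = Module.finrank ℂ S := by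
  classical
  set e := stdOrthonormalBasis ℂ K₀ with he
  set f := stdOrthonormalBasis ℂ K with hf
  set gb := stdOrthonormalBasis ℂ W₁ with hgb
  set h : Fin (Module.finrank ℂ K₀) → H := fun i => T₀.coord (e i) ξ with hh
  have hxi : ∑ i, T₀.tm (e i) (h i) = ξ := T₀.sum_coord e ξ
  set Φ := PhiMap T₀ T₁ e ξ with hΦdef
  have hΦ : ∀ v, Φ v = ∑ i, T₁.tm (v (e i)) (h i) := fun v => PhiMap_apply T₀ T₁ e ξ v
  have hleft : ∀ v, leftOp T₀ T₁ e v ξ = Φ v := fun v => rfl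
  have hreal : ∀ (v : K₀ →ₗ[ℂ] K) (V : W₀ →ₗ[ℂ] W₁),
      IsLeftTensor T₀ T₁ v V → V ξ = Φ v := by
    intro v V hV
    rw [isLeftTensor_unique T₀ T₁ v hV (leftOp_isLeftTensor T₀ T₁ e v)]
    exact hleft v
  -- H is nontrivial
  have hξ0 : ξ ≠ 0 := by
    intro h0; rw [h0, norm_zero] at hξ; norm_num at hξ
  have hηne : ∃ η : H, η ≠ 0 := by
    by_contra hcon
    push_neg at hcon
    have hsub : {w : W₀ | ∃ k η, w = T₀.tm k η} ⊆ {(0 : W₀)} := by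
      rintro w ⟨k, η, rfl⟩
      rw [hcon η]; simp
    have hle : (⊤ : Submodule ℂ W₀) ≤ Submodule.span ℂ {(0 : W₀)} := by
      rw [← T₀.span_tm]; exact Submodule.span_mono hsub
    have := hle (Submodule.mem_top (x := ξ))
    rw [Submodule.span_zero_singleton, Submodule.mem_bot] at this
    exact hξ0 this
  -- linear independence of the h i
  have hindep : ∀ c : Fin (Module.finrank ℂ K₀) → ℂ,
      ∑ i, c i • h i = 0 → ∀ i, c i = 0 := by
    intro c hc
    obtain ⟨η₀, hη₀⟩ := hηne
    set k : K₀ := ∑ j, (starRingEnd ℂ (c j)) • e j with hk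
    have horth := orthonormal_iff_ite.mp e.orthonormal
    have hke : ∀ i, (⟪k, e i⟫ : ℂ) = c i := by
      intro i
      have hstep : (∑ j, (⟪(starRingEnd ℂ) (c j) • e j, e i⟫ : ℂ))
          = ∑ j, c j * if j = i then 1 else 0 := by
        refine Finset.sum_congr rfl (fun j _ => ?_)
        rw [inner_smul_left, horth j i, Complex.conj_conj]
      rw [hk, sum_inner, hstep]
      simp [Finset.sum_ite_eq']
    have hker : ∀ η : H, T₀.tm k η = 0 := by
      intro η
      have horthall : ∀ x ∈ {x : W₀ | ∃ (b : H →ₗ[ℂ] H) (Tb : W₀ →ₗ[ℂ] W₀),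
          IsRightTensor T₀ b Tb ∧ x = Tb ξ}, (⟪T₀.tm k η, x⟫ : ℂ) = 0 := by
        rintro x ⟨b, Tb, hTb, rfl⟩
        have hTbξ : Tb ξ = ∑ i, T₀.tm (e i) (b (h i)) := by
          rw [← hxi, map_sum]
          exact Finset.sum_congr rfl (fun i _ => hTb (e i) (h i))
        rw [hTbξ, inner_sum]
        rw [Finset.sum_congr rfl (fun i _ => by
          rw [T₀.inner_tm, hke i])]
        have hsum : ∑ i, c i * (⟪η, b (h i)⟫ : ℂ) = ⟪η, b (∑ i, c i • h i)⟫ := by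
          rw [map_sum, inner_sum]
          exact Finset.sum_congr rfl (fun i _ => by rw [map_smul, inner_smul_right])
        rw [hsum, hc, map_zero, inner_zero_right]
      have hgen : ∀ x ∈ Submodule.span ℂ {x : W₀ | ∃ (b : H →ₗ[ℂ] H)
          (Tb : W₀ →ₗ[ℂ] W₀), IsRightTensor T₀ b Tb ∧ x = Tb ξ},
          (⟪T₀.tm k η, x⟫ : ℂ) = 0 := by
        intro x hx
        induction hx using Submodule.span_induction with
        | mem x hx => exact horthall x hx
        | zero => simp
        | add x y _ _ hx hy => rw [inner_add_right, hx, hy, add_zero]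
        | smul c x _ hx => rw [inner_smul_right, hx, mul_zero]
      have hz := hgen (T₀.tm k η) (by rw [hcyc]; trivial)
      rwa [inner_self_eq_zero] at hz
    have hk0 : k = 0 := by
      have h1 := hker η₀
      have h2 : (⟪k, k⟫ : ℂ) * ⟪η₀, η₀⟫ = 0 := by
        rw [← T₀.inner_tm, h1, inner_zero_left]
      have hη2 : (⟪η₀, η₀⟫ : ℂ) ≠ 0 := by rwa [ne_eq, inner_self_eq_zero]
      have hkk : (⟪k, k⟫ : ℂ) = 0 := by
        rcases mul_eq_zero.mp h2 with h | h
        · exact h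
        · exact absurd h hη2
      rwa [inner_self_eq_zero] at hkk
    intro i
    rw [← hke i, hk0, inner_zero_left]
  -- injectivity of Φ
  have hΦker : ∀ v, Φ v = 0 → v = 0 := by
    intro v hv
    have hve : ∀ i, v (e i) = 0 := by
      intro i
      have key : ∀ k' : K, (⟪k', v (e i)⟫ : ℂ) = 0 := by
        intro k'
        have hz : ∀ η : H, (⟪η, ∑ j, (⟪k', v (e j)⟫ : ℂ) • h j⟫ : ℂ) = 0 := by
          intro η
          have h0 : (⟪T₁.tm k' η, Φ v⟫ : ℂ) = 0 := by rw [hv, inner_zero_right]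
          rw [hΦ, inner_sum] at h0
          rw [inner_sum, ← h0]
          exact Finset.sum_congr rfl (fun j _ => by
            rw [T₁.inner_tm, inner_smul_right])
        have hsum0 : ∑ j, (⟪k', v (e j)⟫ : ℂ) • h j = 0 := by
          have := hz (∑ j, (⟪k', v (e j)⟫ : ℂ) • h j)
          rwa [inner_self_eq_zero] at this
        exact hindep _ hsum0 i
      have := key (v (e i))
      rwa [inner_self_eq_zero] at this
    apply Module.Basis.ext e.toBasis
    intro i
    rw [show e.toBasis i = e i from congrFun e.coe_toBasis i, hve i]
    simp
  have hΦinj : ∀ v v', Φ v = Φ v' → v = v' := by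
    intro v v' hvv
    have := hΦker (v - v') (by rw [map_sub, hvv, sub_self])
    rwa [sub_eq_zero] at this
  -- the projection Q onto the span of the h i
  set H₁ : Submodule ℂ H := Submodule.span ℂ (Set.range h) with hH₁
  set Q : H →ₗ[ℂ] H :=
    H₁.subtype ∘ₗ ((Submodule.orthogonalProjection H₁ : H →L[ℂ] H₁) : H →ₗ[ℂ] H₁) with hQ
  have hQapp : ∀ x : H, Q x = (Submodule.orthogonalProjection H₁ x : H) := fun x => rfl
  have hQmem : ∀ x : H, Q x ∈ H₁ := fun x => (Submodule.orthogonalProjection H₁ x).2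
  have hQid : ∀ x ∈ H₁, Q x = x := by
    intro x hx
    rw [hQapp]
    exact Submodule.starProjection_eq_self_iff.mpr hx
  have hQh : ∀ i, Q (h i) = h i := fun i =>
    hQid _ (Submodule.subset_span ⟨i, rfl⟩)
  have hQsym : ∀ x y : H, (⟪Q x, y⟫ : ℂ) = ⟪x, Q y⟫ := fun x y =>
    Submodule.inner_starProjection_left_eq_right H₁ x y
  -- Tb₁, the realization of 1 ⊗ Q on W₁
  set Tb₁ := rightOp T₁ f Q with hTb₁
  have hTb₀ξ : rightOp T₀ e Q ξ = ξ := by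
    conv_lhs => rw [← hxi, map_sum]
    rw [Finset.sum_congr rfl (fun i _ => by
      rw [rightOp_isRightTensor T₀ e Q (e i) (h i), hQh i])]
    exact hxi
  have htr1 : LinearMap.trace ℂ W₁ (D ∘ₗ Tb₁) = 1 := by
    have := hext Q (rightOp T₀ e Q) Tb₁ (rightOp_isRightTensor T₀ e Q)
      (rightOp_isRightTensor T₁ f Q)
    rw [hTb₀ξ] at this
    rw [this, inner_self_eq_norm_sq_to_K, hξ]
    norm_num
  -- E := 1 - Tb₁
  set Eop : W₁ →ₗ[ℂ] W₁ := LinearMap.id - Tb₁ with hEop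
  have hTb1sym : ∀ x y : W₁, (⟪Tb₁ x, y⟫ : ℂ) = ⟪x, Tb₁ y⟫ := by
    intro x y
    rw [T₁.inner_eq_sum_coord f (Tb₁ x) y, T₁.inner_eq_sum_coord f x (Tb₁ y)]
    exact Finset.sum_congr rfl (fun j _ => by
      rw [hTb₁, coord_rightOp, coord_rightOp, hQsym])
  have hQQ : ∀ x, Q (Q x) = Q x := fun x => hQid _ (hQmem x)
  have hTb1apply : ∀ w, Tb₁ w = ∑ j, T₁.tm (f j) (Q (T₁.coord (f j) w)) := by
    intro w
    rw [hTb₁]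
    simp [rightOp]
  have hcoordTb1 : ∀ (j) (w : W₁), T₁.coord (f j) (Tb₁ w) = Q (T₁.coord (f j) w) := by
    intro j w
    rw [hTb₁]
    exact coord_rightOp T₁ f Q j w
  have hTb1idem : ∀ w, Tb₁ (Tb₁ w) = Tb₁ w := by
    intro w
    rw [hTb1apply (Tb₁ w)]
    have hstep : (∑ j, T₁.tm (f j) (Q (T₁.coord (f j) (Tb₁ w))))
        = ∑ j, T₁.tm (f j) (Q (T₁.coord (f j) w)) := by
      refine Finset.sum_congr rfl (fun j _ => ?_)
      rw [hcoordTb1 j w, hQQ]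
    rw [hstep]
    exact (hTb1apply w).symm
  have hEsym : ∀ x y : W₁, (⟪Eop x, y⟫ : ℂ) = ⟪x, Eop y⟫ := by
    intro x y
    simp only [hEop, LinearMap.sub_apply, LinearMap.id_apply, inner_sub_left,
      inner_sub_right, hTb1sym]
  have hEidem : ∀ w, Eop (Eop w) = Eop w := by
    intro w
    simp only [hEop, LinearMap.sub_apply, LinearMap.id_apply, map_sub, hTb1idem]
    abel
  have hDsym : ∀ x y : W₁, (⟪D x, y⟫ : ℂ) = ⟪x, D y⟫ :=
    (LinearMap.isSymmetric_iff_isSelfAdjoint D).mpr hDsa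
  -- trace of D ∘ Eop is zero
  have htrE : LinearMap.trace ℂ W₁ (D ∘ₗ Eop) = 0 := by
    have hcomp : D ∘ₗ Eop = D - D ∘ₗ Tb₁ := by
      ext w; simp [hEop, LinearMap.sub_apply]
    rw [hcomp, map_sub, hDtr, htr1, sub_self]
  -- trace of Eop ∘ D ∘ Eop is zero
  have hEE : Eop ∘ₗ Eop = Eop := LinearMap.ext hEidem
  have htrA : LinearMap.trace ℂ W₁ (Eop ∘ₗ (D ∘ₗ Eop)) = 0 := by
    have := LinearMap.trace_mul_comm ℂ Eop (D ∘ₗ Eop)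
    rw [show Eop * (D ∘ₗ Eop) = Eop ∘ₗ (D ∘ₗ Eop) from rfl,
      show (D ∘ₗ Eop) * Eop = D ∘ₗ (Eop ∘ₗ Eop) from by
        rw [Module.End.mul_eq_comp, LinearMap.comp_assoc]] at this
    rw [this, hEE, htrE]
  -- each diagonal entry vanishes
  have hDEzero : ∀ w : W₁, D (Eop w) = 0 := by
    have hsum : ∑ i, (⟪gb i, Eop (D (Eop (gb i)))⟫ : ℂ) = 0 := by
      have h0 := trace_eq_sum_inner' gb (Eop ∘ₗ (D ∘ₗ Eop))
      rw [htrA] at h0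
      simp only [LinearMap.comp_apply] at h0
      exact h0.symm
    have hterm : ∀ i, (⟪gb i, Eop (D (Eop (gb i)))⟫ : ℂ)
        = ⟪D (Eop (gb i)), Eop (gb i)⟫ := by
      intro i
      rw [← hEsym, ← hDsym]
    have hdiag : ∀ i, (⟪D (Eop (gb i)), Eop (gb i)⟫ : ℂ) = 0 := by
      have hre0 : ∑ i, (⟪D (Eop (gb i)), Eop (gb i)⟫ : ℂ).re = 0 := by
        have h2 := congrArg Complex.re hsum
        rw [Complex.re_sum, Complex.zero_re] at h2
        calc ∑ i, (⟪D (Eop (gb i)), Eop (gb i)⟫ : ℂ).re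
            = ∑ i, (⟪gb i, Eop (D (Eop (gb i)))⟫ : ℂ).re :=
              Finset.sum_congr rfl (fun i _ => by rw [hterm i])
          _ = 0 := h2
      have him : ∀ i, (⟪D (Eop (gb i)), Eop (gb i)⟫ : ℂ).im = 0 := by
        intro i
        have h1 : starRingEnd ℂ (⟪D (Eop (gb i)), Eop (gb i)⟫ : ℂ)
            = ⟪D (Eop (gb i)), Eop (gb i)⟫ := by
          rw [inner_conj_symm]
          exact (hDsym (Eop (gb i)) (Eop (gb i))).symm
        exact Complex.conj_eq_iff_im.mp h1
      intro i
      have heach : (⟪D (Eop (gb i)), Eop (gb i)⟫ : ℂ).re = 0 := by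
        have := Finset.sum_eq_zero_iff_of_nonneg
          (fun j (_ : j ∈ Finset.univ) => hDpos (Eop (gb j)))
        exact (this.mp hre0) i (Finset.mem_univ i)
      exact Complex.ext heach (him i)
    have hDgb : ∀ i, D (Eop (gb i)) = 0 := fun i =>
      pos_symm_inner_self_zero D hDsym hDpos (hdiag i)
    have hDEop : D ∘ₗ Eop = 0 := by
      apply Module.Basis.ext gb.toBasis
      intro i
      rw [show gb.toBasis i = gb i from congrFun gb.coe_toBasis i]
      simpa using hDgb i
    intro w
    simpa using congrArg (fun F => F w) hDEop
  have hEDzero : ∀ w : W₁, Eop (D w) = 0 := by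
    intro w
    apply ext_inner_left ℂ
    intro y
    rw [inner_zero_right, ← hEsym, ← hDsym, hDEzero, inner_zero_left]
  -- range D is contained in range Φ
  have htm_mem : ∀ (k' : K) (η : H), η ∈ H₁ → T₁.tm k' η ∈ LinearMap.range Φ := by
    intro k' η hη
    induction hη using Submodule.span_induction with
    | mem x hx =>
      obtain ⟨i, rfl⟩ := hx
      refine ⟨Module.Basis.constr e.toBasis ℂ (Pi.single i k'), ?_⟩
      rw [hΦ]
      rw [Finset.sum_congr rfl (fun j (_ : j ∈ Finset.univ) => by
        rw [show e j = e.toBasis j from (congrFun e.coe_toBasis j).symm,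
          Module.Basis.constr_basis])]
      rw [Finset.sum_eq_single i]
      · rw [Pi.single_eq_same]
      · intro j _ hj
        rw [Pi.single_eq_of_ne hj]
        simp
      · intro hi; exact absurd (Finset.mem_univ i) hi
    | zero => simp
    | add x y _ _ hx hy =>
      rw [map_add]; exact Submodule.add_mem _ hx hy
    | smul c x _ hx =>
      rw [map_smul]; exact Submodule.smul_mem _ c hx
  have hTb1range : ∀ w, Tb₁ w ∈ LinearMap.range Φ := by
    intro w
    rw [hTb1apply w]
    exact Submodule.sum_mem _ (fun j _ => htm_mem _ _ (hQmem _))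
  have hrange : ∀ ζ ∈ LinearMap.range D, ∃ v, Φ v = ζ := by
    rintro ζ ⟨w, rfl⟩
    have hfix : Tb₁ (D w) = D w := by
      have := hEDzero w
      simp only [hEop, LinearMap.sub_apply, LinearMap.id_apply, sub_eq_zero] at this
      exact this.symm
    obtain ⟨v, hv⟩ := hTb1range (D w)
    exact ⟨v, by rw [hv, hfix]⟩
  -- assemble the conclusion
  constructor
  · intro ζ hζ
    obtain ⟨v, hvζ⟩ := hrange ζ hζ
    refine ⟨v, ⟨leftOp T₀ T₁ e v, leftOp_isLeftTensor T₀ T₁ e v, by rw [hleft v, hvζ]⟩, ?_⟩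
    rintro v' ⟨V', hV', hV'ξ⟩
    apply hΦinj
    rw [← hreal v' V' hV', hV'ξ, hvζ]
  · refine ⟨Submodule.comap Φ (LinearMap.range D), ?_, ?_, ?_⟩
    · ext v
      simp only [SetLike.mem_coe, Submodule.mem_comap, Set.mem_setOf_eq]
      constructor
      · intro hv
        exact ⟨leftOp T₀ T₁ e v, leftOp_isLeftTensor T₀ T₁ e v, by rw [hleft v]; exact hv⟩
      · rintro ⟨V, hV, hVmem⟩
        rwa [hreal v V hV] at hVmem
    · have hmaps : ∀ v ∈ Submodule.comap Φ (LinearMap.range D),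
          Φ v ∈ LinearMap.range D := fun v hv => hv
      set Φr := Φ.restrict hmaps with hΦr
      have hrapp : ∀ x : (Submodule.comap Φ (LinearMap.range D)),
          ((Φr x : LinearMap.range D) : W₁) = Φ (x : K₀ →ₗ[ℂ] K) := fun x => rfl
      have hinj : Function.Injective Φr := by
        intro a b hab
        apply Subtype.ext
        apply hΦinj
        rw [← hrapp a, ← hrapp b, hab]
      have hsurj : Function.Surjective Φr := by
        rintro ⟨ζ, hζ⟩
        obtain ⟨v, hv⟩ := hrange ζ hζ
        refine ⟨⟨v, ?_⟩, ?_⟩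
        · simp only [Submodule.mem_comap, hv]; exact hζ
        · apply Subtype.ext
          rw [hrapp]
          exact hv
      refine ⟨LinearEquiv.ofBijective Φr ⟨hinj, hsurj⟩, ?_⟩
      intro v
      refine ⟨leftOp T₀ T₁ e (v : K₀ →ₗ[ℂ] K),
        leftOp_isLeftTensor T₀ T₁ e (v : K₀ →ₗ[ℂ] K), ?_⟩
      rw [hleft]
      rw [show ((LinearEquiv.ofBijective Φr ⟨hinj, hsurj⟩) v : W₁) = Φ (v : K₀ →ₗ[ℂ] K)
        from hrapp v]
    · have hmaps : ∀ v ∈ Submodule.comap Φ (LinearMap.range D),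
          Φ v ∈ LinearMap.range D := fun v hv => hv
      set Φr := Φ.restrict hmaps with hΦr
      have hrapp : ∀ x : (Submodule.comap Φ (LinearMap.range D)),
          ((Φr x : LinearMap.range D) : W₁) = Φ (x : K₀ →ₗ[ℂ] K) := fun x => rfl
      have hinj : Function.Injective Φr := by
        intro a b hab
        apply Subtype.ext
        apply hΦinj
        rw [← hrapp a, ← hrapp b, hab]
      have hsurj : Function.Surjective Φr := by
        rintro ⟨ζ, hζ⟩
        obtain ⟨v, hv⟩ := hrange ζ hζ
        refine ⟨⟨v, ?_⟩, ?_⟩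
        · simp only [Submodule.mem_comap, hv]; exact hζ
        · apply Subtype.ext
          rw [hrapp]
          exact hv
      exact ((LinearEquiv.ofBijective Φr ⟨hinj, hsurj⟩).symm).finrank_eq
end

section
/- Let H, K be finite-dimensional complex Hilbert spaces, ω a faithful state of B(H) with cyclic representing vector ξ_ω ∈ H⊗H, and let v = (v₁,…,v_r), v' = (v₁',…,v_r') be r-tuples in B(H,K) with ∑ v_k*v_k = ∑ v_k'*v_k' = 1_H. Define states ρ_v(x) = ∑_{k=1}^r ⟨x(v_k⊗1_H)ξ_ω, (v_k⊗1_H)ξ_ω⟩ on B(K⊗H). Then ρ_v = ρ_{v'} if and only if there is a unitary r×r complex matrix (λ_{ij}) with v_i' = ∑_j λ_{ij} v_j for all i. -/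
open scoped ComplexInnerProductSpace

lemma HilbertTensor.exists_rightTensor {K H W : Type*}
    [NormedAddCommGroup K] [InnerProductSpace ℂ K] [FiniteDimensional ℂ K]
    [NormedAddCommGroup H] [InnerProductSpace ℂ H] [FiniteDimensional ℂ H]
    [NormedAddCommGroup W] [InnerProductSpace ℂ W]
    (T : HilbertTensor K H W) (b : H →ₗ[ℂ] H) :
    ∃ Tb : W →ₗ[ℂ] W, IsRightTensor T b Tb := by
  classical
  set f := stdOrthonormalBasis ℂ K
  set e := stdOrthonormalBasis ℂ H
  set g : (Fin (Module.finrank ℂ K) × Fin (Module.finrank ℂ H)) → W :=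
    fun p => T.tm (f p.1) (e p.2) with hg
  have expand : ∀ (c : H →ₗ[ℂ] H) (ξ : K) (η : H),
      T.tm ξ (c η) = ∑ p : Fin (Module.finrank ℂ K) × Fin (Module.finrank ℂ H),
        ((⟪f p.1, ξ⟫ : ℂ) * (⟪e p.2, η⟫ : ℂ)) • T.tm (f p.1) (c (e p.2)) := by
    intro c ξ η
    conv_lhs => rw [← f.sum_repr' ξ, ← e.sum_repr' η]
    rw [Fintype.sum_prod_type]
    simp only [map_sum, map_smul, LinearMap.sum_apply, LinearMap.smul_apply,
      Finset.smul_sum, smul_smul]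
    rw [Finset.sum_comm]
    simp [mul_comm]
  have horth : Orthonormal ℂ g := by
    rw [orthonormal_iff_ite]
    intro p q
    rw [hg]
    simp only []
    rw [T.inner_tm]
    rw [orthonormal_iff_ite.mp f.orthonormal, orthonormal_iff_ite.mp e.orthonormal]
    by_cases h1 : p.1 = q.1 <;> by_cases h2 : p.2 = q.2 <;>
      simp [h1, h2, Prod.ext_iff]
  have hspan : ⊤ ≤ Submodule.span ℂ (Set.range g) := by
    rw [← T.span_tm]
    rw [Submodule.span_le]
    rintro w ⟨ξ, η, rfl⟩
    have := expand LinearMap.id ξ η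
    simp only [LinearMap.id_coe, id_eq] at this
    rw [this]
    exact Submodule.sum_mem _ fun p _ => Submodule.smul_mem _ _
      (Submodule.subset_span ⟨p, rfl⟩)
  let B : Module.Basis _ ℂ W := Module.Basis.mk horth.linearIndependent hspan
  refine ⟨B.constr ℂ (fun p => T.tm (f p.1) (b (e p.2))), ?_⟩
  intro ξ η
  have h1 := expand LinearMap.id ξ η
  simp only [LinearMap.id_coe, id_eq] at h1
  rw [h1, map_sum]
  rw [expand b ξ η]
  congr 1
  ext p
  rw [map_smul]
  congr 1
  have : g p = B p := by rw [Module.Basis.mk_apply]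
  rw [show T.tm (f p.1) (e p.2) = B p from this, B.constr_basis]

lemma leftTensor_separating {K H W₀ W₁ : Type*}
    [NormedAddCommGroup K] [InnerProductSpace ℂ K] [FiniteDimensional ℂ K]
    [NormedAddCommGroup H] [InnerProductSpace ℂ H] [FiniteDimensional ℂ H]
    [NormedAddCommGroup W₀] [InnerProductSpace ℂ W₀]
    [NormedAddCommGroup W₁] [InnerProductSpace ℂ W₁]
    (T₀ : HilbertTensor H H W₀) (T₁ : HilbertTensor K H W₁)
    (ξω : W₀) (hξ : ‖ξω‖ = 1)
    (hcyc : Submodule.span ℂ {x : W₀ | ∃ (b : H →ₗ[ℂ] H) (Tb : W₀ →ₗ[ℂ] W₀),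
        IsRightTensor T₀ b Tb ∧ x = Tb ξω} = ⊤)
    (d : H →ₗ[ℂ] K) (D : W₀ →ₗ[ℂ] W₁)
    (hD : IsLeftTensor T₀ T₁ d D) (hD0 : D ξω = 0) : d = 0 := by
  -- D vanishes on all generators Tb ξω
  have hDzero : D = 0 := by
    apply LinearMap.ext_on hcyc
    rintro x ⟨b, Tb, hTb, rfl⟩
    obtain ⟨T1b, hT1b⟩ := T₁.exists_rightTensor b
    have hcomm : D ∘ₗ Tb = T1b ∘ₗ D := by
      apply LinearMap.ext_on T₀.span_tm
      rintro w ⟨ξ, η, rfl⟩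
      rw [LinearMap.comp_apply, LinearMap.comp_apply, hTb, hD, hD, hT1b]
    have : D (Tb ξω) = T1b (D ξω) := congrFun (congrArg (fun f => f.toFun) hcomm) ξω
    rw [this, hD0, map_zero]
    rfl
  -- some nonzero η in H
  have hη : ∃ η : H, η ≠ 0 := by
    by_contra hc
    push_neg at hc
    have : ∀ w ∈ {w : W₀ | ∃ ξ η, w = T₀.tm ξ η}, w = 0 := by
      rintro w ⟨ξ, η, rfl⟩
      rw [hc η, map_zero]
    have hsub : {w : W₀ | ∃ ξ η, w = T₀.tm ξ η} ⊆ {(0 : W₀)} := fun w hw => this w hw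
    have h0 : Submodule.span ℂ {w : W₀ | ∃ ξ η, w = T₀.tm ξ η} ≤ ⊥ := by
      rw [← Submodule.span_zero_singleton ℂ]
      exact Submodule.span_mono hsub
    have hmem : ξω ∈ Submodule.span ℂ {w : W₀ | ∃ ξ η, w = T₀.tm ξ η} := by
      rw [T₀.span_tm]; trivial
    have hz : ξω = 0 := by simpa using h0 hmem
    rw [hz] at hξ
    simp at hξ
  obtain ⟨η, hη0⟩ := hη
  ext a
  have h1 : T₁.tm (d a) η = 0 := by
    have := hD a η
    rw [hDzero] at this
    simpa using this.symm
  have h2 : (⟪d a, d a⟫ : ℂ) * ⟪η, η⟫ = 0 := by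
    rw [← T₁.inner_tm, h1, inner_zero_left]
  have h3 : (⟪η, η⟫ : ℂ) ≠ 0 := by
    rw [inner_self_ne_zero]; exact hη0
  have h4 : (⟪d a, d a⟫ : ℂ) = 0 := by
    rcases mul_eq_zero.mp h2 with h | h
    · exact h
    · exact absurd h h3
  simpa [inner_self_eq_zero] using h4

/-- With `ω` a faithful state of `B(H)` having cyclic
representing vector `ξω ∈ H ⊗ H`, and `v, v'` two `r`-tuples in `B(H,K)` with
`∑ vₖ* vₖ = ∑ vₖ'* vₖ' = 1`, the associated states
`ρ_v(x) = ∑ₖ ⟨x(vₖ⊗1)ξω, (vₖ⊗1)ξω⟩` coincide iff `v' = λ·v` for a unitary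
`r×r` scalar matrix `λ`. -/
theorem rho_eq_iff_unitary_related
    {K H W₀ W₁ : Type*}
    [NormedAddCommGroup K] [InnerProductSpace ℂ K] [FiniteDimensional ℂ K]
    [NormedAddCommGroup H] [InnerProductSpace ℂ H] [FiniteDimensional ℂ H]
    [NormedAddCommGroup W₀] [InnerProductSpace ℂ W₀] [FiniteDimensional ℂ W₀]
    [NormedAddCommGroup W₁] [InnerProductSpace ℂ W₁] [FiniteDimensional ℂ W₁]
    (T₀ : HilbertTensor H H W₀) (T₁ : HilbertTensor K H W₁)
    (ξω : W₀) (hξ : ‖ξω‖ = 1)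
    (hcyc : Submodule.span ℂ {x : W₀ | ∃ (b : H →ₗ[ℂ] H) (Tb : W₀ →ₗ[ℂ] W₀),
        IsRightTensor T₀ b Tb ∧ x = Tb ξω} = ⊤)
    (r : ℕ) (v v' : Fin r → (H →ₗ[ℂ] K))
    (hv : ∑ k, (LinearMap.adjoint (v k)) ∘ₗ (v k) = LinearMap.id)
    (hv' : ∑ k, (LinearMap.adjoint (v' k)) ∘ₗ (v' k) = LinearMap.id)
    (Vop Vop' : Fin r → (W₀ →ₗ[ℂ] W₁))
    (hVop : ∀ k, IsLeftTensor T₀ T₁ (v k) (Vop k))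
    (hVop' : ∀ k, IsLeftTensor T₀ T₁ (v' k) (Vop' k)) :
    (∀ x : W₁ →ₗ[ℂ] W₁,
        (∑ k, (⟪Vop k ξω, x (Vop k ξω)⟫ : ℂ)) =
          ∑ k, (⟪Vop' k ξω, x (Vop' k ξω)⟫ : ℂ)) ↔
      ∃ lam : Matrix (Fin r) (Fin r) ℂ,
        lam ∈ Matrix.unitaryGroup (Fin r) ℂ ∧
        ∀ i, v' i = ∑ j, lam i j • v j := by
  constructor
  · intro h
    classical
    set E := EuclideanSpace ℂ (Fin r) with hE
    let S : W₁ →ₗ[ℂ] E :=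
      { toFun := fun w => (WithLp.toLp 2 (fun k => (⟪Vop k ξω, w⟫ : ℂ)) : EuclideanSpace ℂ (Fin r))
        map_add' := by
          intro a b; ext k
          show (⟪Vop k ξω, a + b⟫ : ℂ) = (⟪Vop k ξω, a⟫ : ℂ) + ⟪Vop k ξω, b⟫
          rw [inner_add_right]
        map_smul' := by
          intro c a; ext k
          show (⟪Vop k ξω, c • a⟫ : ℂ) = c * ⟪Vop k ξω, a⟫
          rw [inner_smul_right] }
    let S' : W₁ →ₗ[ℂ] E :=
      { toFun := fun w => (WithLp.toLp 2 (fun k => (⟪Vop' k ξω, w⟫ : ℂ)) : EuclideanSpace ℂ (Fin r))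
        map_add' := by
          intro a b; ext k
          show (⟪Vop' k ξω, a + b⟫ : ℂ) = (⟪Vop' k ξω, a⟫ : ℂ) + ⟪Vop' k ξω, b⟫
          rw [inner_add_right]
        map_smul' := by
          intro c a; ext k
          show (⟪Vop' k ξω, c • a⟫ : ℂ) = c * ⟪Vop' k ξω, a⟫
          rw [inner_smul_right] }
    have hS : ∀ w k, S w k = (⟪Vop k ξω, w⟫ : ℂ) := fun _ _ => rfl
    have hS' : ∀ w k, S' w k = (⟪Vop' k ξω, w⟫ : ℂ) := fun _ _ => rfl
    -- polarized identity
    have key : ∀ a b : W₁, (⟪S a, S b⟫ : ℂ) = ⟪S' a, S' b⟫ := by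
      intro a b
      have hx := h (LinearMap.smulRight ((innerSL ℂ a).toLinearMap) b)
      simp only [LinearMap.smulRight_apply, ContinuousLinearMap.coe_coe, innerSL_apply_apply,
        inner_smul_right] at hx
      rw [PiLp.inner_apply, PiLp.inner_apply]
      simp only [hS, hS', RCLike.inner_apply, ← inner_conj_symm a]
      simpa [mul_comm] using hx
    -- kernels agree
    have hker : ∀ w, S w = 0 ↔ S' w = 0 := by
      intro w
      rw [← inner_self_eq_zero (𝕜 := ℂ) (x := S w),
          ← inner_self_eq_zero (𝕜 := ℂ) (x := S' w), key w w]
    have hkereq : LinearMap.ker S = LinearMap.ker S' := by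
      ext w
      simp only [LinearMap.mem_ker]
      exact hker w
    -- the partial isometry on range S
    let q : (W₁ ⧸ LinearMap.ker S) →ₗ[ℂ] E :=
      Submodule.liftQ (LinearMap.ker S) S' hkereq.le
    let φ₀ : ↥(LinearMap.range S) →ₗ[ℂ] E :=
      q ∘ₗ (S.quotKerEquivRange.symm : ↥(LinearMap.range S) ≃ₗ[ℂ] _).toLinearMap
    have hφ₀ : ∀ w : W₁, φ₀ ⟨S w, LinearMap.mem_range_self S w⟩ = S' w := by
      intro w
      have h1 := S.quotKerEquivRange_symm_apply_image w (LinearMap.mem_range_self S w)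
      simp only [φ₀, LinearMap.comp_apply, LinearEquiv.coe_coe, h1, Submodule.mkQ_apply,
        Submodule.liftQ_apply, q]
    have hnorm : ∀ w : W₁, ‖S w‖ = ‖S' w‖ := by
      intro w
      have hk := key w w
      rw [inner_self_eq_norm_sq_to_K, inner_self_eq_norm_sq_to_K] at hk
      have h2 : ‖S w‖ ^ 2 = ‖S' w‖ ^ 2 := by exact_mod_cast hk
      nlinarith [norm_nonneg (S w), norm_nonneg (S' w)]
    let φ : ↥(LinearMap.range S) →ₗᵢ[ℂ] E :=
      { toLinearMap := φ₀
        norm_map' := by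
          rintro ⟨x, hx⟩
          obtain ⟨w, rfl⟩ := hx
          rw [hφ₀ w]
          simpa using (hnorm w).symm }
    let L : E →ₗᵢ[ℂ] E := φ.extend
    have hLS : ∀ w : W₁, L (S w) = S' w := by
      intro w
      have := φ.extend_apply ⟨S w, LinearMap.mem_range_self S w⟩
      rw [← hφ₀ w]
      exact this
    -- matrix of L
    have hsingle : ∀ (z : E) i, (⟪EuclideanSpace.single i (1 : ℂ), z⟫ : ℂ) = z i := by
      intro z i
      rw [EuclideanSpace.inner_single_left]
      simp
    have hdecomp : ∀ y : E, y = ∑ j, y j • EuclideanSpace.single j (1 : ℂ) := by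
      intro y
      have := (EuclideanSpace.basisFun (Fin r) ℂ).sum_repr' y
      simp only [EuclideanSpace.basisFun_apply, hsingle] at this
      exact this.symm
    set M : Matrix (Fin r) (Fin r) ℂ :=
      fun i j => (L (EuclideanSpace.single j (1 : ℂ))) i with hMdef
    have hLy : ∀ (y : E) i, (L y) i = ∑ j, M i j * y j := by
      intro y i
      rw [← hsingle (L y) i]
      conv_lhs => rw [hdecomp y, map_sum, inner_sum]
      refine Finset.sum_congr rfl fun j _ => ?_
      rw [map_smul, inner_smul_right, hsingle]
      ring
    have hrelS : ∀ (w : W₁) k, (⟪Vop' k ξω, w⟫ : ℂ) = ∑ j, M k j * ⟪Vop j ξω, w⟫ := by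
      intro w k
      have h1 : (⟪EuclideanSpace.single k (1:ℂ), S' w⟫ : ℂ)
          = ⟪EuclideanSpace.single k (1:ℂ), L (S w)⟫ := by rw [hLS]
      rw [hsingle, hsingle] at h1
      rw [hS'] at h1
      rw [h1, hLy]
      simp only [hS]
    set lam : Matrix (Fin r) (Fin r) ℂ := fun i j => (starRingEnd ℂ) (M i j) with hlamdef
    have hlam_apply : ∀ i j, lam i j = (starRingEnd ℂ) (M i j) := fun _ _ => rfl
    have hstar_apply : ∀ j i, (star lam) j i = M i j := by
      intro j i
      rw [Matrix.star_apply, hlam_apply]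
      simp
    refine ⟨lam, ?_, ?_⟩
    · -- unitarity
      have hMu : ∀ j l, (∑ i, (starRingEnd ℂ) (M i j) * M i l) = if j = l then 1 else 0 := by
        intro j l
        have h1 := L.inner_map_map (EuclideanSpace.single j (1:ℂ))
          (EuclideanSpace.single l (1:ℂ))
        rw [PiLp.inner_apply] at h1
        simp only [RCLike.inner_apply] at h1
        rw [hsingle] at h1
        rw [EuclideanSpace.single_apply] at h1
        simpa [eq_comm, mul_comm, hMdef] using h1
      rw [Matrix.mem_unitaryGroup_iff']
      ext j l
      rw [Matrix.mul_apply, Matrix.one_apply]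
      have step : ∀ i : Fin r, (star lam) j i * lam i l
          = (starRingEnd ℂ) ((starRingEnd ℂ) (M i j) * M i l) := by
        intro i
        rw [hstar_apply, hlam_apply, map_mul, Complex.conj_conj]
      rw [Finset.sum_congr rfl fun i _ => step i, ← map_sum, hMu]
      split <;> simp
    · -- the relation
      intro i
      have hu' : Vop' i ξω = ∑ j, lam i j • Vop j ξω := by
        apply ext_inner_right ℂ
        intro w
        rw [hrelS w i, sum_inner]
        refine Finset.sum_congr rfl fun j _ => ?_
        rw [inner_smul_left, hlam_apply, Complex.conj_conj]
      have hD : IsLeftTensor T₀ T₁ (v' i - ∑ j, lam i j • v j)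
          (Vop' i - ∑ j, lam i j • Vop j) := by
        intro k η
        have h1 : ∀ j, Vop j (T₀.tm k η) = T₁.tm (v j k) η := fun j => hVop j k η
        rw [LinearMap.sub_apply, LinearMap.sum_apply, hVop' i k η]
        rw [LinearMap.sub_apply, map_sub, LinearMap.sub_apply]
        congr 1
        rw [LinearMap.sum_apply, map_sum, LinearMap.sum_apply]
        refine Finset.sum_congr rfl fun j _ => ?_
        rw [LinearMap.smul_apply, LinearMap.smul_apply, map_smul, LinearMap.smul_apply, h1]
      have hD0 : (Vop' i - ∑ j, lam i j • Vop j) ξω = 0 := by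
        rw [LinearMap.sub_apply, hu', LinearMap.sum_apply]
        rw [sub_eq_zero]
        refine Finset.sum_congr rfl fun j _ => ?_
        rw [LinearMap.smul_apply]
      have hz := leftTensor_separating T₀ T₁ ξω hξ hcyc _ _ hD hD0
      exact sub_eq_zero.mp hz
  · rintro ⟨lam, hlam, hrel⟩
    classical
    have hVrel : ∀ i, Vop' i = ∑ j, lam i j • Vop j := by
      intro i
      apply LinearMap.ext_on T₀.span_tm
      rintro w ⟨ξ, η, rfl⟩
      have h1 : ∀ j, Vop j (T₀.tm ξ η) = T₁.tm (v j ξ) η := fun j => hVop j ξ η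
      rw [hVop' i ξ η, hrel i]
      simp [LinearMap.sum_apply, LinearMap.smul_apply, h1, map_sum, map_smul]
    have hdelta : ∀ j l, (∑ k, (starRingEnd ℂ) (lam k j) * lam k l)
        = if j = l then 1 else 0 := by
      intro j l
      have h := Matrix.mem_unitaryGroup_iff'.mp hlam
      rw [← Matrix.ext_iff] at h
      have h2 := h j l
      simpa [Matrix.mul_apply, Matrix.one_apply, Matrix.star_apply] using h2
    intro x
    symm
    have hu : ∀ k, Vop' k ξω = ∑ j, lam k j • (Vop j ξω) := by
      intro k; rw [hVrel k]; simp
    calc ∑ k, (⟪Vop' k ξω, x (Vop' k ξω)⟫ : ℂ)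
        = ∑ k, ∑ j, ∑ l, ((starRingEnd ℂ) (lam k j) * lam k l)
            * ⟪Vop j ξω, x (Vop l ξω)⟫ := by
          refine Finset.sum_congr rfl fun k _ => ?_
          rw [hu k, map_sum, sum_inner]
          refine Finset.sum_congr rfl fun j _ => ?_
          rw [inner_smul_left, inner_sum, Finset.mul_sum]
          refine Finset.sum_congr rfl fun l _ => ?_
          rw [map_smul, inner_smul_right]
          ring
      _ = ∑ j, ∑ l, (∑ k, (starRingEnd ℂ) (lam k j) * lam k l)
            * ⟪Vop j ξω, x (Vop l ξω)⟫ := by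
          rw [Finset.sum_comm]
          refine Finset.sum_congr rfl fun j _ => ?_
          rw [Finset.sum_comm]
          refine Finset.sum_congr rfl fun l _ => ?_
          rw [Finset.sum_mul]
      _ = ∑ j, (⟪Vop j ξω, x (Vop j ξω)⟫ : ℂ) := by
          refine Finset.sum_congr rfl fun j _ => ?_
          rw [Finset.sum_eq_single j]
          · rw [hdelta]; simp
          · intro l _ hl
            rw [hdelta]
            simp [Ne.symm hl]
          · intro h; exact absurd (Finset.mem_univ j) h
end

section
/- Let H, K be finite-dimensional complex Hilbert spaces with n = dim H, and let ρ be a separable state of B(K⊗H) of rank r that restricts to a faithful state on 1_K ⊗ B(H). Then r² ≥ n. Equivalently, if r < √n, there is no separable state of rank r whose marginal on B(H) is faithful. -/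
open scoped ComplexInnerProductSpace

/-- `P` realizes the product operator `σ ⊗ τ` on `W ≅ K ⊗ H`. -/
def IsProductOp {K H W : Type*}
    [NormedAddCommGroup K] [InnerProductSpace ℂ K]
    [NormedAddCommGroup H] [InnerProductSpace ℂ H]
    [NormedAddCommGroup W] [InnerProductSpace ℂ W]
    (T : HilbertTensor K H W) (σ : K →ₗ[ℂ] K) (τ : H →ₗ[ℂ] H)
    (P : W →ₗ[ℂ] W) : Prop :=
  ∀ (ξ : K) (η : H), P (T.tm ξ η) = T.tm (σ ξ) (τ η)

/-- A density operator: positive semidefinite with trace one. -/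
def IsDensityOp {E : Type*} [NormedAddCommGroup E] [InnerProductSpace ℂ E]
    [FiniteDimensional ℂ E] (A : E →ₗ[ℂ] E) : Prop :=
  IsSelfAdjoint A ∧ (∀ x : E, 0 ≤ (⟪A x, x⟫ : ℂ).re) ∧ LinearMap.trace ℂ E A = 1

namespace Sep18

/-- rank one map `w ↦ ⟪g, w⟫ • g`. -/
noncomputable def rk1 {E : Type*} [NormedAddCommGroup E] [InnerProductSpace ℂ E]
    (g : E) : E →ₗ[ℂ] E :=
  ((innerSL ℂ g).toLinearMap).smulRight g

@[simp] lemma rk1_apply {E : Type*} [NormedAddCommGroup E] [InnerProductSpace ℂ E]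
    (g w : E) : rk1 g w = ⟪g, w⟫ • g := rfl

lemma trace_eq_sum_inner {E : Type*} [NormedAddCommGroup E] [InnerProductSpace ℂ E]
    [FiniteDimensional ℂ E] {ι : Type*} [Fintype ι] [DecidableEq ι]
    (f : OrthonormalBasis ι ℂ E) (F : E →ₗ[ℂ] E) :
    LinearMap.trace ℂ E F = ∑ i, ⟪f i, F (f i)⟫ := by
  rw [LinearMap.trace_eq_matrix_trace ℂ f.toBasis F, Matrix.trace]
  congr 1
  ext i
  rw [Matrix.diag_apply, LinearMap.toMatrix_apply, f.coe_toBasis_repr_apply,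
    f.repr_apply_apply, f.coe_toBasis]

lemma inner_expand {E : Type*} [NormedAddCommGroup E] [InnerProductSpace ℂ E]
    {ι : Type*} [Fintype ι] (f : OrthonormalBasis ι ℂ E) (x y : E) :
    ∑ i, ⟪x, f i⟫ * ⟪f i, y⟫ = ⟪x, y⟫ := by
  conv_rhs => rw [← f.sum_repr' y]
  rw [inner_sum]
  congr 1; ext i
  rw [inner_smul_right]; ring

variable {K H W : Type*}
    [NormedAddCommGroup K] [InnerProductSpace ℂ K] [FiniteDimensional ℂ K]
    [NormedAddCommGroup H] [InnerProductSpace ℂ H] [FiniteDimensional ℂ H]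
    [NormedAddCommGroup W] [InnerProductSpace ℂ W] [FiniteDimensional ℂ W]
    (T : HilbertTensor K H W)

/-- Contraction against `v` in the first leg. -/
noncomputable def contract (v : K) : W →ₗ[ℂ] H where
  toFun w := ∑ l, ⟪T.tm v (stdOrthonormalBasis ℂ H l), w⟫ • stdOrthonormalBasis ℂ H l
  map_add' x y := by simp [inner_add_right, add_smul, Finset.sum_add_distrib]
  map_smul' c x := by simp [inner_smul_right, smul_smul, Finset.smul_sum]

omit [FiniteDimensional ℂ K] [FiniteDimensional ℂ W] in
lemma contract_tm (v ξ : K) (η : H) :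
    contract T v (T.tm ξ η) = ⟪v, ξ⟫ • η := by
  unfold contract
  simp only [LinearMap.coe_mk, AddHom.coe_mk, T.inner_tm]
  simp_rw [mul_smul, ← Finset.smul_sum]
  congr 1
  exact (stdOrthonormalBasis ℂ H).sum_repr' η

/-- spectral expansion of a positive self-adjoint operator -/
lemma spectral_expand {E : Type*} [NormedAddCommGroup E] [InnerProductSpace ℂ E]
    [FiniteDimensional ℂ E] (σ : E →ₗ[ℂ] E) (hσ : IsDensityOp σ) :
    ∃ (u : OrthonormalBasis (Fin (Module.finrank ℂ E)) ℂ E)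
      (lam : Fin (Module.finrank ℂ E) → ℝ),
      (∀ p, 0 ≤ lam p) ∧ ∀ x : E, σ x = ∑ p, ((lam p : ℂ) * ⟪u p, x⟫) • u p := by
  have hsym : σ.IsSymmetric := (LinearMap.isSymmetric_iff_isSelfAdjoint σ).2 hσ.1
  refine ⟨hsym.eigenvectorBasis rfl, hsym.eigenvalues rfl, ?_, ?_⟩
  · intro p
    have h1 := hσ.2.1 (hsym.eigenvectorBasis rfl p)
    have h2 := hsym.apply_eigenvectorBasis rfl p
    rw [h2] at h1
    have hn : ‖hsym.eigenvectorBasis rfl p‖ = 1 :=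
      (hsym.eigenvectorBasis rfl).orthonormal.1 p
    rw [inner_smul_left, inner_self_eq_norm_sq_to_K, hn] at h1
    simpa using h1
  · intro x
    conv_lhs => rw [← (hsym.eigenvectorBasis rfl).sum_repr' x, map_sum]
    congr 1; ext p
    rw [map_smul, hsym.apply_eigenvectorBasis rfl p, smul_smul, mul_comm]
    norm_cast

lemma prodOp_decomp (σ : K →ₗ[ℂ] K) (τ : H →ₗ[ℂ] H) (P : W →ₗ[ℂ] W)
    (hσ : IsDensityOp σ) (hτ : IsDensityOp τ) (hP : IsProductOp T σ τ P) :
    ∃ (g : Fin (Module.finrank ℂ K) → Fin (Module.finrank ℂ H) → W)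
      (c : Fin (Module.finrank ℂ K) → Fin (Module.finrank ℂ H) → ℝ),
      (∀ p q, 0 ≤ c p q) ∧ P = ∑ p, ∑ q, (c p q : ℂ) • rk1 (g p q) := by
  obtain ⟨u, lam, hlam, hσx⟩ := spectral_expand σ hσ
  obtain ⟨v, mu, hmu, hτx⟩ := spectral_expand τ hτ
  refine ⟨fun p q => T.tm (u p) (v q), fun p q => lam p * mu q,
    fun p q => mul_nonneg (hlam p) (hmu q), ?_⟩
  apply LinearMap.ext_on T.span_tm
  rintro w ⟨ξ, η, rfl⟩
  rw [hP ξ η, hσx ξ, hτx η]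
  simp only [map_sum, map_smul, LinearMap.sum_apply, LinearMap.smul_apply,
    rk1_apply, T.inner_tm, smul_smul, Finset.smul_sum]
  rw [Finset.sum_comm]
  refine Finset.sum_congr rfl fun p _ => Finset.sum_congr rfl fun q _ => ?_
  congr 1
  push_cast
  ring

variable {E : Type*} [NormedAddCommGroup E] [InnerProductSpace ℂ E]

lemma decomp_symm {ι κ : Type*} [Fintype ι] [Fintype κ]
    (g : ι → κ → E) (c : ι → κ → ℝ) {P : E →ₗ[ℂ] E}
    (hPd : P = ∑ p, ∑ q, (c p q : ℂ) • rk1 (g p q)) : P.IsSymmetric := by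
  intro x y
  rw [hPd]
  simp only [LinearMap.sum_apply, LinearMap.smul_apply, rk1_apply, sum_inner, inner_sum,
    inner_smul_left, inner_smul_right, Complex.conj_ofReal, inner_conj_symm]
  refine Finset.sum_congr rfl fun p _ => Finset.sum_congr rfl fun q _ => ?_
  rw [← inner_conj_symm x (g p q)]
  ring

lemma decomp_inner_self {ι κ : Type*} [Fintype ι] [Fintype κ]
    (g : ι → κ → E) (c : ι → κ → ℝ) {P : E →ₗ[ℂ] E}
    (hPd : P = ∑ p, ∑ q, (c p q : ℂ) • rk1 (g p q)) (x : E) :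
    ⟪P x, x⟫ = ((∑ p, ∑ q, c p q * Complex.normSq ⟪g p q, x⟫ : ℝ) : ℂ) := by
  rw [hPd]
  simp only [Complex.ofReal_sum, Complex.ofReal_mul]
  simp only [LinearMap.sum_apply, LinearMap.smul_apply, rk1_apply, sum_inner,
    inner_smul_left, Complex.conj_ofReal]
  refine Finset.sum_congr rfl fun p _ => Finset.sum_congr rfl fun q _ => ?_
  rw [Complex.normSq_eq_conj_mul_self]

lemma decomp_ker {ι κ : Type*} [Fintype ι] [Fintype κ]
    (g : ι → κ → E) (c : ι → κ → ℝ) (hc : ∀ p q, 0 ≤ c p q) {P : E →ₗ[ℂ] E}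
    (hPd : P = ∑ p, ∑ q, (c p q : ℂ) • rk1 (g p q)) (x : E)
    (hx : (⟪P x, x⟫ : ℂ).re = 0) : P x = 0 := by
  have h1 : (∑ p, ∑ q, c p q * Complex.normSq ⟪g p q, x⟫ : ℝ) = 0 := by
    have := decomp_inner_self g c hPd x
    rw [this] at hx
    simpa using hx
  have h2 : ∀ p ∈ Finset.univ, ∀ q ∈ Finset.univ,
      c p q * Complex.normSq ⟪g p q, x⟫ = 0 := by
    have hnn : ∀ p ∈ Finset.univ, (0:ℝ) ≤ ∑ q, c p q * Complex.normSq ⟪g p q, x⟫ :=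
      fun p _ => Finset.sum_nonneg fun q _ =>
        mul_nonneg (hc p q) (Complex.normSq_nonneg _)
    intro p hp q hq
    have hprow := (Finset.sum_eq_zero_iff_of_nonneg hnn).1 h1 p hp
    exact (Finset.sum_eq_zero_iff_of_nonneg
      (fun q _ => mul_nonneg (hc p q) (Complex.normSq_nonneg _))).1 hprow q hq
  rw [hPd]
  simp only [LinearMap.sum_apply, LinearMap.smul_apply, rk1_apply]
  refine Finset.sum_eq_zero fun p _ => Finset.sum_eq_zero fun q _ => ?_
  rcases mul_eq_zero.1 (h2 p (Finset.mem_univ p) q (Finset.mem_univ q)) with h | h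
  · rw [show ((c p q : ℂ)) = 0 by exact_mod_cast h, zero_smul]
  · rw [Complex.normSq_eq_zero.1 h, zero_smul, smul_zero]

end Sep18

open Sep18

/-- A separable state of `B(K⊗H)` of rank `r` whose marginal on
`B(H)` is faithful satisfies `r² ≥ n`, where `n = dim H`. -/
theorem separable_faithful_marginal_rank_sq_ge_dim
    {K H W : Type*}
    [NormedAddCommGroup K] [InnerProductSpace ℂ K] [FiniteDimensional ℂ K]
    [NormedAddCommGroup H] [InnerProductSpace ℂ H] [FiniteDimensional ℂ H]
    [NormedAddCommGroup W] [InnerProductSpace ℂ W] [FiniteDimensional ℂ W]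
    (T : HilbertTensor K H W)
    (D : W →ₗ[ℂ] W) (hD : IsDensityOp D)
    (r : ℕ) (hrank : Module.finrank ℂ (LinearMap.range D) = r)
    -- `ρ` is separable: a finite convex combination of product states
    (hsep : ∃ (s : ℕ) (t : Fin s → ℝ) (σ : Fin s → (K →ₗ[ℂ] K))
        (τ : Fin s → (H →ₗ[ℂ] H)) (P : Fin s → (W →ₗ[ℂ] W)),
      (∀ i, 0 ≤ t i) ∧ (∑ i, t i) = 1 ∧
      (∀ i, IsDensityOp (σ i)) ∧ (∀ i, IsDensityOp (τ i)) ∧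
      (∀ i, IsProductOp T (σ i) (τ i) (P i)) ∧
      D = ∑ i, t i • P i)
    -- the marginal of `ρ` on `B(H)` is faithful
    (hfaith : ∃ A : H →ₗ[ℂ] H,
      (∀ (b : H →ₗ[ℂ] H) (Tb : W →ₗ[ℂ] W), IsRightTensor T b Tb →
        LinearMap.trace ℂ W (D ∘ₗ Tb) = LinearMap.trace ℂ H (A ∘ₗ b)) ∧
      Function.Injective A) :
    Module.finrank ℂ H ≤ r ^ 2 := by
  classical
  obtain ⟨s, t, σ, τ, P, ht0, hts, hσd, hτd, hPod, hDsum⟩ := hsep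
  obtain ⟨A, hA, hAinj⟩ := hfaith
  choose g c hc hPd using fun i =>
    prodOp_decomp T (σ i) (τ i) (P i) (hσd i) (hτd i) (hPod i)
  have hDsym : D.IsSymmetric := (LinearMap.isSymmetric_iff_isSelfAdjoint D).2 hD.1
  have hPsym : ∀ i, (P i).IsSymmetric := fun i => decomp_symm (g i) (c i) (hPd i)
  -- kernel of D is killed by each P i with t i ≠ 0
  have hker : ∀ x, D x = 0 → ∀ i, t i ≠ 0 → P i x = 0 := by
    intro x hx i hi
    have hDx : (0:ℂ) = ∑ j, (t j : ℂ) * ⟪P j x, x⟫ := by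
      have h0 : (⟪D x, x⟫ : ℂ) = 0 := by rw [hx, inner_zero_left]
      rw [← h0, hDsum]
      simp only [LinearMap.sum_apply, LinearMap.smul_apply, sum_inner]
      refine Finset.sum_congr rfl fun j _ => ?_
      rw [RCLike.real_smul_eq_coe_smul (K := ℂ), inner_smul_left, RCLike.conj_ofReal]
      norm_cast
    have hre : ∑ j, t j * (⟪P j x, x⟫ : ℂ).re = 0 := by
      have h1 := congrArg Complex.re hDx
      rw [Complex.re_sum] at h1
      simp only [Complex.mul_re, Complex.ofReal_re, Complex.ofReal_im, zero_mul,
        sub_zero] at h1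
      exact h1.symm
    have hterm : ∀ j ∈ Finset.univ, (0:ℝ) ≤ t j * (⟪P j x, x⟫ : ℂ).re := by
      intro j _
      refine mul_nonneg (ht0 j) ?_
      rw [decomp_inner_self (g j) (c j) (hPd j) x]
      simp only [Complex.ofReal_re]
      exact Finset.sum_nonneg fun p _ => Finset.sum_nonneg fun q _ =>
        mul_nonneg (hc j p q) (Complex.normSq_nonneg _)
    have hi0 := (Finset.sum_eq_zero_iff_of_nonneg hterm).1 hre i (Finset.mem_univ i)
    have hre0 : (⟪P i x, x⟫ : ℂ).re = 0 := by
      rcases mul_eq_zero.1 hi0 with h | h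
      · exact absurd h hi
      · exact h
    exact decomp_ker (g i) (c i) (hc i) (hPd i) x hre0
  -- ranges of the P i sit inside the range of D
  have horth : (LinearMap.ker D)ᗮ = LinearMap.range D := by
    have hle : LinearMap.range D ≤ (LinearMap.ker D)ᗮ := by
      rintro _ ⟨x, rfl⟩
      intro z hz
      rw [← hDsym z x, LinearMap.mem_ker.1 hz, inner_zero_left]
    refine (Submodule.eq_of_le_of_finrank_le hle ?_).symm
    have h1 := Submodule.finrank_add_finrank_orthogonal (LinearMap.ker D)
    have h2 := LinearMap.finrank_range_add_finrank_ker D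
    omega
  have hrangeP : ∀ i, t i ≠ 0 → LinearMap.range (P i) ≤ LinearMap.range D := by
    intro i hi
    rw [← horth]
    rintro _ ⟨x, rfl⟩
    intro z hz
    rw [← hPsym i z x, hker z (LinearMap.mem_ker.1 hz) i hi, inner_zero_left]
  -- the key spanning set
  set Y : Set H := {η : H | ∃ ξ : K, ξ ≠ 0 ∧ T.tm ξ η ∈ LinearMap.range D} with hYdef
  have hτY : ∀ i, t i ≠ 0 → ∀ η, τ i η ∈ Submodule.span ℂ Y := by
    intro i hi η
    by_cases h0 : τ i η = 0
    · rw [h0]; exact zero_mem _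
    · have hσne : σ i ≠ 0 := by
        intro h
        have h1 := (hσd i).2.2
        rw [h, map_zero] at h1
        exact one_ne_zero h1.symm
      obtain ⟨ξ₀, hξ₀⟩ : ∃ ξ₀, σ i ξ₀ ≠ 0 := by
        by_contra h
        push_neg at h
        exact hσne (LinearMap.ext fun ξ => by simpa using h ξ)
      refine Submodule.subset_span ⟨σ i ξ₀, hξ₀, ?_⟩
      rw [show T.tm (σ i ξ₀) (τ i η) = P i (T.tm ξ₀ η) from (hPod i ξ₀ η).symm]
      exact hrangeP i hi ⟨T.tm ξ₀ η, rfl⟩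
  -- dimension bound for the span of Y
  obtain ⟨b, hbY, hbspan, hbind⟩ := exists_linearIndependent ℂ Y
  have hbfin : b.Finite := hbind.setFinite
  haveI : Fintype b := hbfin.fintype
  choose xi hxi1 hxi2 using fun (η : b) => hbY η.2
  have hMdim : Module.finrank ℂ (Submodule.span ℂ Y) ≤ r := by
    have hF : LinearIndependent ℂ (fun η : b => T.tm (xi η) (↑η : H)) := by
      rw [Fintype.linearIndependent_iff]
      intro gg hgg i₀
      have hv : ∀ v : K, ∑ η : b, (gg η * ⟪v, xi η⟫) • (↑η : H) = 0 := by
        intro v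
        have h1 := congrArg (contract T v) hgg
        rw [map_sum, map_zero] at h1
        refine Eq.trans ?_ h1
        refine Finset.sum_congr rfl fun η _ => ?_
        rw [map_smul, contract_tm, smul_smul]
      have h0 := Fintype.linearIndependent_iff.1 hbind
        (fun η => gg η * ⟪xi i₀, xi η⟫) (hv (xi i₀)) i₀
      have hne : (⟪xi i₀, xi i₀⟫ : ℂ) ≠ 0 := by
        simpa [inner_self_eq_zero] using hxi1 i₀
      exact (mul_eq_zero.1 h0).resolve_right hne
    have hF' : LinearIndependent ℂ
        (fun η : b => (⟨T.tm (xi η) (↑η : H), hxi2 η⟩ : LinearMap.range D)) := by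
      apply LinearIndependent.of_comp (LinearMap.range D).subtype
      exact hF
    have hcard : Fintype.card b ≤ Module.finrank ℂ (LinearMap.range D) :=
      hF'.fintype_card_le_finrank
    rw [← hbspan, finrank_span_set_eq_card hbind]
    rw [hrank] at hcard
    simpa using hcard
  -- the span of Y is everything
  have hMtop : Submodule.span ℂ Y = ⊤ := by
    rw [← Submodule.orthogonal_eq_bot_iff, Submodule.eq_bot_iff]
    intro η hη
    have hτη : ∀ i, t i ≠ 0 → τ i η = 0 := by
      intro i hi
      have hτsym : (τ i).IsSymmetric :=
        (LinearMap.isSymmetric_iff_isSelfAdjoint _).2 (hτd i).1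
      have h1 : (⟪τ i η, τ i η⟫ : ℂ) = 0 := by
        rw [hτsym η (τ i η)]
        exact (Submodule.mem_orthogonal' _ _).1 hη _ (hτY i hi (τ i η))
      exact inner_self_eq_zero.1 h1
    have hDtm : ∀ ξ : K, D (T.tm ξ η) = 0 := by
      intro ξ
      rw [hDsum]
      simp only [LinearMap.sum_apply, LinearMap.smul_apply]
      refine Finset.sum_eq_zero fun i _ => ?_
      by_cases hi : t i = 0
      · rw [hi, zero_smul]
      · rw [hPod i ξ η, hτη i hi, map_zero, smul_zero]
    set e := stdOrthonormalBasis ℂ K with he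
    set bb : H →ₗ[ℂ] H := ((innerSL ℂ (A η)).toLinearMap).smulRight η with hbb
    set Tb : W →ₗ[ℂ] W :=
      ∑ j, ((innerSL ℂ (T.tm (e j) (A η))).toLinearMap).smulRight (T.tm (e j) η) with hTb
    have hRT : IsRightTensor T bb Tb := by
      intro ξ x
      have hξ : T.tm ξ η = ∑ j, ⟪e j, ξ⟫ • T.tm (e j) η := by
        conv_lhs => rw [← e.sum_repr' ξ, map_sum, LinearMap.sum_apply]
        refine Finset.sum_congr rfl fun j _ => ?_
        rw [map_smul, LinearMap.smul_apply]
      rw [hTb, hbb]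
      simp only [LinearMap.sum_apply, LinearMap.smulRight_apply,
        ContinuousLinearMap.coe_coe, innerSL_apply_apply, T.inner_tm]
      rw [map_smul, hξ, Finset.smul_sum]
      refine Finset.sum_congr rfl fun j _ => ?_
      rw [smul_smul, mul_comm]
    have hDTb : D ∘ₗ Tb = 0 := by
      apply LinearMap.ext
      intro w
      rw [LinearMap.comp_apply, hTb]
      simp only [LinearMap.sum_apply, LinearMap.smulRight_apply, map_sum, map_smul]
      rw [LinearMap.zero_apply]
      exact Finset.sum_eq_zero fun j _ => by rw [hDtm (e j), smul_zero]
    have htr := hA bb Tb hRT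
    rw [hDTb, map_zero] at htr
    have htr2 : LinearMap.trace ℂ H (A ∘ₗ bb) = ⟪A η, A η⟫ := by
      rw [trace_eq_sum_inner (stdOrthonormalBasis ℂ H)]
      have : ∀ l, ⟪stdOrthonormalBasis ℂ H l, (A ∘ₗ bb) (stdOrthonormalBasis ℂ H l)⟫
          = ⟪A η, stdOrthonormalBasis ℂ H l⟫ * ⟪stdOrthonormalBasis ℂ H l, A η⟫ := by
        intro l
        rw [LinearMap.comp_apply, hbb]
        simp only [LinearMap.smulRight_apply, ContinuousLinearMap.coe_coe, innerSL_apply_apply]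
        rw [map_smul, inner_smul_right]
      rw [Finset.sum_congr rfl fun l _ => this l]
      exact inner_expand _ (A η) (A η)
    rw [htr2] at htr
    have hAη : A η = 0 := inner_self_eq_zero.1 htr.symm
    exact hAinj (by rw [hAη, map_zero])
  have hfr : Module.finrank ℂ H ≤ r := by
    have h1 : Module.finrank ℂ H = Module.finrank ℂ (Submodule.span ℂ Y) := by
      rw [hMtop, finrank_top]
    rw [h1]
    exact hMdim
  exact hfr.trans (Nat.le_self_pow two_ne_zero r)
end
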